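/- arXiv:math/0303353 — 8 statements merged into one kernel-verified Lean document; each statement's English description precedes it below -/
import Mathlib

section
/- Define S(n,m) = Σ_{(m_0,…,m_n)} (−1)^{ε(m_*)} and S'(n,m) = Σ_{(m_0,…,m_n)} (−1)^{m_0 + ε(m_*)}, where the sums range over all (n+1)-tuples of nonnegative integers with m_0+⋯+m_n = m. Then for all integers j ≥ 1 and k ≥ 1: S(2j, 2k) = C(j+k, j); S(2j, 2k−1) = C(j+k−1, j); S(2j−1, 2k) = C(j+k−1, k); S(2j−1, 2k−1) = 0; S'(2j, 2k) = C(j+k, j); S'(2j, 2k−1) = −C(j+k−1, j); S'(2j−1, 2k) = 2·C(j+k, k) − C(j+k−1, k); and S'(2j−1, 2k−1) = 2·C(j+k−1, j). Here C(a,b) denotes the binomial coefficient. -/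
open Finset

/-- `eps n v = v (n-1) + v (n-3) + ⋯`: the exponent of the sign of the
shuffle encoded by the tuple `v = (m_0, …, m_n)`. -/
def eps (n : ℕ) (v : Fin (n+1) → ℕ) : ℕ :=
  ∑ t ∈ Finset.range ((n+1)/2), v ⟨n - 1 - 2*t, by omega⟩

/-- `psumV n v i = v 0 + v 1 + ⋯ + v (i-1)`. -/
def psumV (n : ℕ) (v : Fin (n+1) → ℕ) (i : ℕ) : ℕ :=
  ∑ t : Fin (n+1), if (t : ℕ) < i then v t else 0

/-- `S(n,m) = Σ (-1)^{ε(m_*)}` over all `(n+1)`-tuples summing to `m`. -/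
def Ssum (n m : ℕ) : ℤ :=
  ∑ v ∈ Finset.Nat.antidiagonalTuple (n+1) m, (-1 : ℤ) ^ eps n v

/-- `S'(n,m) = Σ (-1)^{m_0 + ε(m_*)}` over all `(n+1)`-tuples summing to `m`. -/
def S'sum (n m : ℕ) : ℤ :=
  ∑ v ∈ Finset.Nat.antidiagonalTuple (n+1) m, (-1 : ℤ) ^ (v 0 + eps n v)

/-! Removing the first entry `m_0` of a tuple turns `ε` for `n + 1` into `ε` for `n`, plus `m_0`
when `n` is even. So `S(n + 1, ·)` and `S'(n + 1, ·)` are convolutions of `S(n, ·)` with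
`a ↦ ((-1) ^ (n + 1)) ^ a` and `a ↦ ((-1) ^ n) ^ a`, i.e. `S(n + 1, m + 1)` is `S(n, m + 1)` plus
or minus `S(n + 1, m)`, and likewise for `S'`. The closed forms then follow by induction on `n`
and on `m`, two values of `m` at a time, from Pascal's rule. -/

theorem Finset.Nat.sum_antidiagonalTuple_succ {M : Type*} [AddCommMonoid M] (k m : ℕ)
    (f : (Fin (k + 1) → ℕ) → M) :
    ∑ v ∈ Nat.antidiagonalTuple (k + 1) m, f v =
      ∑ p ∈ antidiagonal m, ∑ w ∈ Nat.antidiagonalTuple k p.2, f (Fin.cons p.1 w) := by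
  have hval : (antidiagonal m).val = (List.Nat.antidiagonal m : Multiset (ℕ × ℕ)) := rfl
  simp only [Finset.sum, Nat.antidiagonalTuple, Multiset.Nat.antidiagonalTuple,
    List.Nat.antidiagonalTuple, List.flatMap, hval, Multiset.map_coe, Multiset.sum_coe,
    List.map_flatten, List.sum_flatten, List.map_map, Function.comp_def]

theorem Finset.Nat.sum_antidiagonal_succ_pow_mul {R : Type*} [CommSemiring R] (c : R)
    (g : ℕ → R) (m : ℕ) :
    ∑ p ∈ antidiagonal (m + 1), c ^ p.1 * g p.2 =
      g (m + 1) + c * ∑ p ∈ antidiagonal m, c ^ p.1 * g p.2 := by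
  simp only [Nat.sum_antidiagonal_succ, pow_zero, one_mul, mul_sum, pow_succ', mul_assoc]

theorem eps_succ_cons (n a : ℕ) (v : Fin (n + 1) → ℕ) :
    eps (n + 1) (Fin.cons a v) = eps n v + if Even n then a else 0 := by
  have hsucc : ∀ t ∈ range ((n + 1) / 2),
      (Fin.cons a v : Fin (n + 2) → ℕ) ⟨n + 1 - 1 - 2 * t, by omega⟩ = v ⟨n - 1 - 2 * t, by omega⟩ := by
    intro t ht
    rw [mem_range] at ht
    rw [← Fin.cons_succ (α := fun _ => ℕ) a v]
    congr 1
    ext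
    simp only [Fin.val_succ]
    omega
  unfold eps
  rcases Nat.even_or_odd n with hn | hn
  · have hlast : (⟨n + 1 - 1 - 2 * ((n + 1) / 2), by omega⟩ : Fin (n + 2)) = 0 := by
      ext; simp only [Fin.val_zero]; omega
    rw [if_pos hn, show (n + 1 + 1) / 2 = (n + 1) / 2 + 1 by grind, sum_range_succ,
      sum_congr rfl hsucc, hlast, Fin.cons_zero]
  · rw [if_neg (Nat.not_even_iff_odd.mpr hn), show (n + 1 + 1) / 2 = (n + 1) / 2 by grind,
      sum_congr rfl hsucc, add_zero]

theorem neg_one_pow_eps_succ_cons (n a : ℕ) (v : Fin (n + 1) → ℕ) :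
    (-1 : ℤ) ^ eps (n + 1) (Fin.cons a v) = ((-1) ^ (n + 1)) ^ a * (-1) ^ eps n v := by
  rw [eps_succ_cons, pow_add, mul_comm]
  congr 1
  rcases Nat.even_or_odd n with hn | hn
  · rw [if_pos hn, hn.add_one.neg_one_pow]
  · rw [if_neg (Nat.not_even_iff_odd.mpr hn), hn.add_one.neg_one_pow, one_pow, pow_zero]

theorem Ssum_succ (n m : ℕ) :
    Ssum (n + 1) m = ∑ p ∈ antidiagonal m, ((-1) ^ (n + 1)) ^ p.1 * Ssum n p.2 := by
  rw [Ssum, Finset.Nat.sum_antidiagonalTuple_succ]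
  refine sum_congr rfl fun p _ => ?_
  simp only [Ssum, mul_sum, neg_one_pow_eps_succ_cons]

theorem S'sum_succ (n m : ℕ) :
    S'sum (n + 1) m = ∑ p ∈ antidiagonal m, ((-1) ^ n) ^ p.1 * Ssum n p.2 := by
  rw [S'sum, Finset.Nat.sum_antidiagonalTuple_succ]
  refine sum_congr rfl fun p _ => ?_
  rw [Ssum, mul_sum]
  refine sum_congr rfl fun w _ => ?_
  rw [Fin.cons_zero, pow_add, neg_one_pow_eps_succ_cons, ← mul_assoc, ← mul_pow,
    show (-1 : ℤ) * (-1) ^ (n + 1) = (-1) ^ n by ring]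

theorem Ssum_succ_succ (n m : ℕ) :
    Ssum (n + 1) (m + 1) = Ssum n (m + 1) + (-1) ^ (n + 1) * Ssum (n + 1) m := by
  rw [Ssum_succ n (m + 1), Ssum_succ n m, Finset.Nat.sum_antidiagonal_succ_pow_mul]

theorem S'sum_succ_succ (n m : ℕ) :
    S'sum (n + 1) (m + 1) = Ssum n (m + 1) + (-1) ^ n * S'sum (n + 1) m := by
  rw [S'sum_succ n (m + 1), S'sum_succ n m, Finset.Nat.sum_antidiagonal_succ_pow_mul]

theorem Ssum_zero_left (m : ℕ) : Ssum 0 m = 1 := by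
  simp [Ssum, eps]

theorem S'sum_zero_left (m : ℕ) : S'sum 0 m = (-1) ^ m := by
  simp [S'sum, eps]

theorem Ssum_zero_right (n : ℕ) : Ssum n 0 = 1 := by
  simp [Ssum, eps, Finset.Nat.antidiagonalTuple_zero_right]

theorem S'sum_zero_right (n : ℕ) : S'sum n 0 = 1 := by
  simp [S'sum, eps, Finset.Nat.antidiagonalTuple_zero_right]

theorem even_odd_values_of_recurrence {f g A B : ℕ → ℤ} {c : ℤ}
    (hf : ∀ m, f (m + 1) = g (m + 1) + c * f m) (h0 : f 0 = A 0)
    (hB : ∀ s, B s = g (2 * s + 1) + c * A s) (hA : ∀ s, A (s + 1) = g (2 * (s + 1)) + c * B s)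
    (s : ℕ) : f (2 * s) = A s ∧ f (2 * s + 1) = B s := by
  induction s with
  | zero => exact ⟨h0, by rw [hf, h0, hB]⟩
  | succ s ih =>
    have he : f (2 * (s + 1)) = A (s + 1) := by rw [hA, ← ih.2]; exact hf (2 * s + 1)
    exact ⟨he, by rw [hf, he, hB]⟩

theorem Ssum_two_mul_add_one_of (j : ℕ)
    (h : ∀ s, Ssum (2 * j) (2 * s) = (j + s).choose j ∧ Ssum (2 * j) (2 * s + 1) = (j + s).choose j)
    (s : ℕ) : Ssum (2 * j + 1) (2 * s) = (j + s).choose j ∧ Ssum (2 * j + 1) (2 * s + 1) = 0 := by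
  have hsign : (-1 : ℤ) ^ (2 * j + 1) = -1 := (odd_two_mul_add_one j).neg_one_pow
  apply even_odd_values_of_recurrence (Ssum_succ_succ (2 * j))
  · simp [Ssum_zero_right]
  · intro s
    rw [(h s).2, hsign]; ring
  · intro s
    rw [(h (s + 1)).1]; ring

theorem Ssum_two_mul (j s : ℕ) :
    Ssum (2 * j) (2 * s) = (j + s).choose j ∧ Ssum (2 * j) (2 * s + 1) = (j + s).choose j := by
  induction j generalizing s with
  | zero => simp [Ssum_zero_left]
  | succ j ih =>
    have hsign : (-1 : ℤ) ^ (2 * j + 1 + 1) = 1 := (even_two_mul (j + 1)).neg_one_pow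
    have hodd := Ssum_two_mul_add_one_of j ih
    apply even_odd_values_of_recurrence (Ssum_succ_succ (2 * j + 1))
    · simp [Ssum_zero_right]
    · intro s
      rw [(hodd s).2, hsign]; ring
    · intro s
      rw [(hodd (s + 1)).1, hsign, show j + 1 + (s + 1) = j + s + 1 + 1 by ring,
        Nat.choose_succ_succ']
      push_cast; ring_nf

theorem Ssum_two_mul_add_one (j s : ℕ) :
    Ssum (2 * j + 1) (2 * s) = (j + s).choose j ∧ Ssum (2 * j + 1) (2 * s + 1) = 0 :=
  Ssum_two_mul_add_one_of j (Ssum_two_mul j) s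

theorem S'sum_two_mul (j s : ℕ) :
    S'sum (2 * j) (2 * s) = (j + s).choose j ∧ S'sum (2 * j) (2 * s + 1) = -(j + s).choose j := by
  rcases j with _ | j
  · simp [S'sum_zero_left, pow_succ]
  have hsign : (-1 : ℤ) ^ (2 * j + 1) = -1 := (odd_two_mul_add_one j).neg_one_pow
  apply even_odd_values_of_recurrence (S'sum_succ_succ (2 * j + 1))
  · simp [S'sum_zero_right]
  · intro s
    rw [(Ssum_two_mul_add_one j s).2, hsign]; ring
  · intro s
    rw [(Ssum_two_mul_add_one j (s + 1)).1, hsign, show j + 1 + (s + 1) = j + s + 1 + 1 by ring,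
      Nat.choose_succ_succ']
    push_cast; ring_nf

theorem S'sum_two_mul_add_one (j s : ℕ) :
    S'sum (2 * j + 1) (2 * s) = (j + 1 + s).choose (j + 1) + (j + s).choose (j + 1) ∧
      S'sum (2 * j + 1) (2 * s + 1) = 2 * (j + 1 + s).choose (j + 1) := by
  have hsign : (-1 : ℤ) ^ (2 * j) = 1 := (even_two_mul j).neg_one_pow
  apply even_odd_values_of_recurrence (S'sum_succ_succ (2 * j))
  · simp [S'sum_zero_right]
  · intro s
    rw [(Ssum_two_mul j s).2, hsign, show j + 1 + s = j + s + 1 by ring, Nat.choose_succ_succ']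
    push_cast; ring
  · intro s
    rw [(Ssum_two_mul j (s + 1)).1, hsign, show j + 1 + (s + 1) = j + s + 1 + 1 by ring,
      Nat.choose_succ_succ']
    push_cast; ring_nf

theorem stmt3 (j k : ℕ) (hj : 1 ≤ j) (hk : 1 ≤ k) :
    Ssum (2*j) (2*k) = ((j+k).choose j : ℤ) ∧
    Ssum (2*j) (2*k-1) = ((j+k-1).choose j : ℤ) ∧
    Ssum (2*j-1) (2*k) = ((j+k-1).choose k : ℤ) ∧
    Ssum (2*j-1) (2*k-1) = 0 ∧
    S'sum (2*j) (2*k) = ((j+k).choose j : ℤ) ∧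
    S'sum (2*j) (2*k-1) = -((j+k-1).choose j : ℤ) ∧
    S'sum (2*j-1) (2*k) = 2*((j+k).choose k : ℤ) - ((j+k-1).choose k : ℤ) ∧
    S'sum (2*j-1) (2*k-1) = 2*((j+k-1).choose j : ℤ) := by
  obtain ⟨j, rfl⟩ := Nat.exists_eq_add_of_le' hj
  obtain ⟨k, rfl⟩ := Nat.exists_eq_add_of_le' hk
  rw [show 2 * (j + 1) - 1 = 2 * j + 1 by omega, show 2 * (k + 1) - 1 = 2 * k + 1 by omega,
    show j + 1 + (k + 1) - 1 = j + 1 + k by omega]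
  have hcomm : j + 1 + k = j + (k + 1) := Nat.add_right_comm j 1 k
  refine ⟨(Ssum_two_mul (j + 1) (k + 1)).1, (Ssum_two_mul (j + 1) k).2, ?_,
    (Ssum_two_mul_add_one j k).2, (S'sum_two_mul (j + 1) (k + 1)).1, (S'sum_two_mul (j + 1) k).2,
    ?_, (S'sum_two_mul_add_one j k).2⟩
  · rw [(Ssum_two_mul_add_one j (k + 1)).1, hcomm, Nat.choose_symm_add]
  · have hpascal : (j + 1 + (k + 1)).choose (k + 1) =
        (j + 1 + k).choose k + (j + 1 + k).choose (k + 1) :=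
      Nat.choose_succ_succ' _ _
    rw [(S'sum_two_mul_add_one j (k + 1)).1, Nat.choose_symm_add, hpascal, hcomm,
      Nat.choose_symm_of_eq_add (show j + (k + 1) = j + 1 + k by omega)]
    push_cast; ring
end

section
/- Define X_1(n,m) = Σ_{(m_0,…,m_n)} (−1)^{ε(m_*)} · (1 + Σ_{i=1}^{n} (−1)^{m_0+⋯+m_{i−1}}), the sum over all (n+1)-tuples of nonnegative integers with m_0+⋯+m_n = m. Then for all integers j ≥ 1 and k ≥ 1: X_1(2j, 2k) = (2j+1)·C(j+k, j); X_1(2j, 2k−1) = C(j+k−1, j); X_1(2j−1, 2k) = (2j+2k)·C(j+k−1, k); and X_1(2j−1, 2k−1) = 2k·C(j+k−1, k). Here C(a,b) denotes the binomial coefficient. -/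
open Finset

/-- `X₁(n,m)`: the sum over all shuffles of `a_0 a_1 ⋯ a_n` with `b_1 ⋯ b_m`
keeping `a_0` first (encoded by `(n+1)`-tuples summing to `m`) of the
oriented sign sum `sgn σ · Σ_{i=0}^n sgn_σ(a_i, b_1, …, b_m)`. -/
def X1 (n m : ℕ) : ℤ :=
  ∑ v ∈ Finset.Nat.antidiagonalTuple (n+1) m,
    (-1 : ℤ) ^ eps n v * (1 + ∑ i ∈ Finset.Icc 1 n, (-1 : ℤ) ^ psumV n v i)

/-!
For fixed `i`, the summand `(-1) ^ (ε(m_*) + m_0 + ⋯ + m_{i-1})` is `∏ l, s_l ^ m_l` for the sign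
vector with `s_l = -1` exactly when `l ≡ n [MOD 2] ↔ l < i`, so summing it over the tuples with
`∑ m_l = m` gives the coefficient of `x^m` in `∏ l, (1 - s_l x)⁻¹ = (1 - x)^{-a} (1 + x)^{-b}`,
where `b` counts the minus signs. For `n = 2j` one has `b = j` or `j + 1` according to the parity
of `i`; for `n = 2j + 1`, `b = j + 1` or `j`. Summing over `i`, the generating function of
`X₁(n, ·)` is `(2j + 1 + x) / (1 - x²)^{j+1}` for `n = 2j` and `2(j + 1)(1 + x) / (1 - x²)^{j+2}`
for `n = 2j + 1`, and the coefficients of `(1 - x²)^{-d}` are binomial coefficients.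
-/

open PowerSeries

theorem coeff_prod_mk_eq_sum_antidiagonalTuple {R : Type*} [CommSemiring R] {N : ℕ}
    (f : Fin N → ℕ → R) (m : ℕ) :
    coeff m (∏ l, mk (f l)) = ∑ v ∈ Nat.antidiagonalTuple N m, ∏ l, f l (v l) := by
  rw [coeff_prod]
  simp only [coeff_mk]
  refine sum_nbij' (⇑) Finsupp.equivFunOnFinite.symm ?_ ?_ ?_ ?_ ?_ <;>
    simp [Nat.mem_antidiagonalTuple]

def geomSeries {R : Type*} [CommSemiring R] (a : R) : R⟦X⟧ := mk fun k => a ^ k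

section GeomSeries

variable {R : Type*} [CommRing R]

theorem geomSeries_mul_one_sub_C_mul_X (a : R) : geomSeries a * (1 - C a * X) = 1 := by
  ext (_ | k) <;> simp [geomSeries, mul_sub, ← mul_assoc, coeff_succ_mul_X, pow_succ]

theorem geomSeries_one_mul_one_sub_X : geomSeries (1 : R) * (1 - X) = 1 := by
  simpa using geomSeries_mul_one_sub_C_mul_X (1 : R)

theorem geomSeries_neg_one_mul_one_add_X : geomSeries (-1 : R) * (1 + X) = 1 := by
  simpa using geomSeries_mul_one_sub_C_mul_X (-1 : R)

theorem expand_geomSeries_one_mul_one_sub_X_sq :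
    expand 2 two_ne_zero (geomSeries (1 : R)) * (1 - X ^ 2) = 1 := by
  simpa using congrArg (expand 2 two_ne_zero) (geomSeries_one_mul_one_sub_X (R := R))

theorem geomSeries_one_mul_geomSeries_neg_one :
    geomSeries (1 : R) * geomSeries (-1) = expand 2 two_ne_zero (geomSeries 1) := by
  -- both sides are inverses of `1 - X ^ 2`
  linear_combination
    (expand 2 two_ne_zero (geomSeries 1) * geomSeries (-1) * (1 + X)) *
        geomSeries_one_mul_one_sub_X (R := R) +
      expand 2 two_ne_zero (geomSeries 1) * geomSeries_neg_one_mul_one_add_X (R := R) -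
      geomSeries 1 * geomSeries (-1) * expand_geomSeries_one_mul_one_sub_X_sq (R := R)

theorem geomSeries_one_pow_add_mul_geomSeries_neg_one_pow (a c : ℕ) :
    geomSeries (1 : R) ^ (a + c) * geomSeries (-1) ^ a
      = expand 2 two_ne_zero (geomSeries 1) ^ (a + c) * (1 + X) ^ c := by
  calc _ = geomSeries (1 : R) ^ (a + c) * geomSeries (-1) ^ a *
        (geomSeries (-1) * (1 + X)) ^ c := by
        rw [geomSeries_neg_one_mul_one_add_X, one_pow, mul_one]
    _ = _ := by rw [← geomSeries_one_mul_geomSeries_neg_one, mul_pow, mul_pow]; ring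

theorem geomSeries_one_pow_mul_geomSeries_neg_one_pow_add (a c : ℕ) :
    geomSeries (1 : R) ^ a * geomSeries (-1) ^ (a + c)
      = expand 2 two_ne_zero (geomSeries 1) ^ (a + c) * (1 - X) ^ c := by
  calc _ = geomSeries (1 : R) ^ a * geomSeries (-1) ^ (a + c) *
        (geomSeries 1 * (1 - X)) ^ c := by
        rw [geomSeries_one_mul_one_sub_X, one_pow, mul_one]
    _ = _ := by rw [← geomSeries_one_mul_geomSeries_neg_one, mul_pow, mul_pow]; ring

theorem geomSeries_one_pow (d : ℕ) :
    geomSeries (1 : R) ^ (d + 1) = mk fun n => ((d + n).choose d : R) := by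
  rw [← mk_one_pow_eq_mk_choose_add]
  simp only [geomSeries, one_pow]
  rfl

theorem coeff_two_mul_expand_geomSeries_one_pow (d k : ℕ) :
    coeff (2 * k) (expand 2 two_ne_zero (geomSeries (1 : R) ^ (d + 1))) = (d + k).choose d := by
  rw [coeff_expand_mul, geomSeries_one_pow, coeff_mk]

theorem coeff_two_mul_add_one_expand (φ : R⟦X⟧) (k : ℕ) :
    coeff (2 * k + 1) (expand 2 two_ne_zero φ) = 0 :=
  coeff_expand_of_not_dvd 2 two_ne_zero φ (by omega)

end GeomSeries

theorem eps_eq_sum_ite (n : ℕ) (v : Fin (n+1) → ℕ) :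
    eps n v = ∑ l : Fin (n+1), if (l : ℕ) % 2 ≠ n % 2 then v l else 0 := by
  rw [eps, ← sum_filter]
  refine sum_nbij' (fun t => ⟨n - 1 - 2 * t, by omega⟩) (fun l => (n - 1 - l) / 2)
    ?_ ?_ ?_ ?_ (fun _ _ => rfl)
  · intro t ht
    simp only [mem_range, mem_filter, mem_univ, true_and] at ht ⊢
    omega
  · intro l hl
    simp only [mem_range, mem_filter, mem_univ, true_and] at hl ⊢
    omega
  · intro t ht
    simp only [mem_range] at ht
    simp only
    omega
  · intro l hl
    simp only [mem_filter, mem_univ, true_and] at hl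
    ext
    simp only
    omega

theorem neg_one_pow_eps_mul_neg_one_pow_psumV (n i : ℕ) (v : Fin (n+1) → ℕ) :
    (-1 : ℤ) ^ eps n v * (-1) ^ psumV n v i
      = ∏ l : Fin (n+1), (if ((l : ℕ) % 2 = n % 2 ↔ (l : ℕ) < i) then -1 else 1) ^ v l := by
  rw [eps_eq_sum_ite, psumV, ← prod_pow_eq_pow_sum, ← prod_pow_eq_pow_sum, ← prod_mul_distrib]
  refine prod_congr rfl fun l _ => ?_
  by_cases h₁ : (l : ℕ) % 2 = n % 2 <;> by_cases h₂ : (l : ℕ) < i <;> simp [h₁, h₂, ← mul_pow]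

def negCount (n i : ℕ) : ℕ := #{l ∈ range (n+1) | (l % 2 = n % 2 ↔ l < i)}

theorem prod_geomSeries_sign (n i : ℕ) :
    ∏ l : Fin (n+1), geomSeries (if ((l : ℕ) % 2 = n % 2 ↔ (l : ℕ) < i) then -1 else 1 : ℤ)
      = geomSeries 1 ^ (n + 1 - negCount n i) * geomSeries (-1) ^ negCount n i := by
  rw [Fin.prod_univ_eq_prod_range
    (fun l => geomSeries (if (l % 2 = n % 2 ↔ l < i) then -1 else 1 : ℤ))]
  simp only [apply_ite geomSeries, prod_ite, prod_const, negCount]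
  rw [mul_comm]
  congr 2
  have := card_filter_add_card_filter_not (s := range (n+1)) (fun l => (l % 2 = n % 2 ↔ l < i))
  rw [card_range] at this
  omega

theorem X1_eq_coeff_sum (n m : ℕ) :
    X1 n m = coeff m (∑ i ∈ range (n+1),
      geomSeries 1 ^ (n + 1 - negCount n i) * geomSeries (-1) ^ negCount n i) := by
  have hrange : range (n+1) = insert 0 (Icc 1 n) := by
    ext
    simp only [mem_range, mem_insert, mem_Icc]
    omega
  have hsplit : ∀ v : Fin (n+1) → ℕ,
      (-1 : ℤ) ^ eps n v * (1 + ∑ i ∈ Icc 1 n, (-1) ^ psumV n v i)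
        = ∑ i ∈ range (n+1), (-1) ^ eps n v * (-1) ^ psumV n v i := by
    intro v
    simp [hrange, psumV, mul_add, mul_sum]
  simp only [X1, hsplit, neg_one_pow_eps_mul_neg_one_pow_psumV, map_sum, ← prod_geomSeries_sign]
  rw [sum_comm]
  simp only [geomSeries, coeff_prod_mk_eq_sum_antidiagonalTuple]

-- The minimum makes the statement hold for every `N`, so that it can be proved by induction.
theorem card_filter_mod_two_iff_lt (q i N : ℕ) :
    #{l ∈ range N | (l % 2 = q % 2 ↔ l < i)} + 2 * ((min N i + q % 2) / 2)
      = (N + q % 2) / 2 + min N i := by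
  induction N with
  | zero => simp
  | succ N ih =>
    rw [range_add_one, filter_insert]
    split_ifs
    · rw [card_insert_of_notMem (by simp)]
      omega
    · omega

theorem negCount_two_mul {j i : ℕ} (hi : i ≤ 2 * j) : negCount (2 * j) i = j + i % 2 := by
  have := card_filter_mod_two_iff_lt (2 * j) i (2 * j + 1)
  rw [negCount]
  omega

theorem negCount_two_mul_add_one {j i : ℕ} (hi : i ≤ 2 * j + 1) :
    negCount (2 * j + 1) i = j + 1 - i % 2 := by
  have := card_filter_mod_two_iff_lt (2 * j + 1) i (2 * j + 1 + 1)
  rw [negCount]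
  omega

theorem sum_range_mod_two {M : Type*} [AddCommMonoid M] (g : ℕ → M) (N : ℕ) :
    ∑ i ∈ range N, g (i % 2) = ((N + 1) / 2) • g 0 + (N / 2) • g 1 := by
  induction N with
  | zero => simp
  | succ N ih =>
    rw [sum_range_succ, ih]
    obtain ⟨t, rfl | rfl⟩ := Nat.even_or_odd' N
    · rw [show (2 * t + 1 + 1) / 2 = t + 1 by omega, show (2 * t + 1) / 2 = t by omega,
        show 2 * t / 2 = t by omega, Nat.mul_mod_right, succ_nsmul]
      abel
    · rw [show (2 * t + 1 + 1 + 1) / 2 = t + 1 by omega, show (2 * t + 1 + 1) / 2 = t + 1 by omega,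
        show (2 * t + 1) / 2 = t by omega, show (2 * t + 1) % 2 = 1 by omega, succ_nsmul (g 1)]
      abel

theorem sum_range_negCount_two_mul {M : Type*} [AddCommMonoid M] (g : ℕ → M) (j : ℕ) :
    ∑ i ∈ range (2 * j + 1), g (negCount (2 * j) i) = (j + 1) • g j + j • g (j + 1) := by
  calc _ = ∑ i ∈ range (2 * j + 1), (fun r => g (j + r)) (i % 2) :=
        sum_congr rfl fun i hi => by rw [negCount_two_mul (Nat.le_of_lt_succ (mem_range.mp hi))]
    _ = _ := by
        rw [sum_range_mod_two (fun r => g (j + r)), show (2 * j + 1 + 1) / 2 = j + 1 by omega,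
          show (2 * j + 1) / 2 = j by omega, add_zero]

theorem sum_range_negCount_two_mul_add_one {M : Type*} [AddCommMonoid M] (g : ℕ → M) (j : ℕ) :
    ∑ i ∈ range (2 * j + 1 + 1), g (negCount (2 * j + 1) i)
      = (j + 1) • g (j + 1) + (j + 1) • g j := by
  calc _ = ∑ i ∈ range (2 * j + 1 + 1), (fun r => g (j + 1 - r)) (i % 2) :=
        sum_congr rfl fun i hi => by
          rw [negCount_two_mul_add_one (Nat.le_of_lt_succ (mem_range.mp hi))]
    _ = _ := by
        rw [sum_range_mod_two (fun r => g (j + 1 - r)),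
          show (2 * j + 1 + 1 + 1) / 2 = j + 1 by omega, show (2 * j + 1 + 1) / 2 = j + 1 by omega,
          tsub_zero, add_tsub_cancel_right]

theorem X1_two_mul_eq_coeff (j m : ℕ) :
    X1 (2 * j) m
      = coeff m (expand 2 two_ne_zero (geomSeries 1 ^ (j + 1)) * (C (2 * j + 1 : ℤ) + X)) := by
  rw [X1_eq_coeff_sum, sum_range_negCount_two_mul
      (fun c => geomSeries (1 : ℤ) ^ (2 * j + 1 - c) * geomSeries (-1) ^ c),
    show 2 * j + 1 - j = j + 1 by omega, show 2 * j + 1 - (j + 1) = j by omega,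
    geomSeries_one_pow_add_mul_geomSeries_neg_one_pow,
    geomSeries_one_pow_mul_geomSeries_neg_one_pow_add, map_pow]
  congr 1
  simp only [nsmul_eq_mul, map_add, map_mul, map_natCast, map_ofNat, map_one, Nat.cast_add,
    Nat.cast_one]
  ring

theorem X1_two_mul_add_one_eq_coeff (j m : ℕ) :
    X1 (2 * j + 1) m = coeff m
      (C (2 * (j + 1) : ℤ) * (expand 2 two_ne_zero (geomSeries 1 ^ (j + 2)) * (1 + X))) := by
  rw [X1_eq_coeff_sum, sum_range_negCount_two_mul_add_one
      (fun c => geomSeries (1 : ℤ) ^ (2 * j + 1 + 1 - c) * geomSeries (-1) ^ c),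
    show 2 * j + 1 + 1 - (j + 1) = j + 1 by omega, show 2 * j + 1 + 1 - j = j + 2 by omega,
    ← mul_pow, geomSeries_one_mul_geomSeries_neg_one,
    geomSeries_one_pow_add_mul_geomSeries_neg_one_pow, map_pow]
  congr 1
  simp only [nsmul_eq_mul, map_mul, map_natCast, map_ofNat, map_add, map_one, Nat.cast_add,
    Nat.cast_one]
  linear_combination
    (-((j : ℤ⟦X⟧) + 1) * expand 2 two_ne_zero (geomSeries 1) ^ (j + 1)) *
      expand_geomSeries_one_mul_one_sub_X_sq (R := ℤ)

theorem X1_two_mul_two_mul_add_two (j k : ℕ) :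
    X1 (2 * j) (2 * k + 2) = (2 * j + 1) * ((j + (k + 1)).choose j : ℤ) := by
  rw [X1_two_mul_eq_coeff, show 2 * k + 2 = 2 * k + 1 + 1 from rfl, mul_add, map_add,
    coeff_mul_C, coeff_succ_mul_X, coeff_two_mul_add_one_expand,
    show 2 * k + 1 + 1 = 2 * (k + 1) from rfl, coeff_two_mul_expand_geomSeries_one_pow, add_zero,
    mul_comm]

theorem X1_two_mul_two_mul_add_one (j k : ℕ) :
    X1 (2 * j) (2 * k + 1) = (j + k).choose j := by
  rw [X1_two_mul_eq_coeff, mul_add, map_add, coeff_mul_C, coeff_succ_mul_X,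
    coeff_two_mul_add_one_expand, coeff_two_mul_expand_geomSeries_one_pow, zero_mul, zero_add]

theorem X1_two_mul_add_one_two_mul_add_two (j k : ℕ) :
    X1 (2 * j + 1) (2 * k + 2)
      = (2 * (j + 1) + 2 * (k + 1)) * ((j + 1 + k).choose (k + 1) : ℤ) := by
  rw [X1_two_mul_add_one_eq_coeff, coeff_C_mul, show 2 * k + 2 = 2 * k + 1 + 1 from rfl,
    mul_one_add, map_add, coeff_succ_mul_X, coeff_two_mul_add_one_expand,
    show 2 * k + 1 + 1 = 2 * (k + 1) from rfl, coeff_two_mul_expand_geomSeries_one_pow, add_zero,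
    show j + 1 + (k + 1) = j + 1 + k + 1 by ring]
  have h := Nat.add_one_mul_choose_eq (j + 1 + k) j
  rw [Nat.choose_symm_of_eq_add (show j + 1 + k = j + (k + 1) by ring)] at h
  zify at h
  linear_combination (-2 : ℤ) * h

theorem X1_two_mul_add_one_two_mul_add_one (j k : ℕ) :
    X1 (2 * j + 1) (2 * k + 1) = 2 * (k + 1) * ((j + 1 + k).choose (k + 1) : ℤ) := by
  rw [X1_two_mul_add_one_eq_coeff, coeff_C_mul, mul_one_add, map_add, coeff_succ_mul_X,
    coeff_two_mul_add_one_expand, coeff_two_mul_expand_geomSeries_one_pow, zero_add,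
    show j + 1 + k = j + k + 1 by ring]
  have hj := Nat.add_one_mul_choose_eq (j + k) j
  have hk := Nat.add_one_mul_choose_eq (j + k) k
  rw [Nat.choose_symm_add] at hj
  zify at hj hk
  linear_combination 2 * hk - 2 * hj

theorem stmt5 (j k : ℕ) (hj : 1 ≤ j) (hk : 1 ≤ k) :
    X1 (2*j) (2*k) = (2*j+1)*((j+k).choose j : ℤ) ∧
    X1 (2*j) (2*k-1) = ((j+k-1).choose j : ℤ) ∧
    X1 (2*j-1) (2*k) = (2*j+2*k)*((j+k-1).choose k : ℤ) ∧
    X1 (2*j-1) (2*k-1) = 2*k*((j+k-1).choose k : ℤ) := by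
  obtain ⟨J, rfl⟩ : ∃ J, j = J + 1 := ⟨j - 1, by omega⟩
  obtain ⟨K, rfl⟩ : ∃ K, k = K + 1 := ⟨k - 1, by omega⟩
  rw [show 2 * (J + 1) - 1 = 2 * J + 1 by omega, show 2 * (K + 1) - 1 = 2 * K + 1 by omega,
    show 2 * (K + 1) = 2 * K + 2 by ring, show J + 1 + (K + 1) - 1 = J + 1 + K by omega]
  push_cast
  exact ⟨X1_two_mul_two_mul_add_two _ _, X1_two_mul_two_mul_add_one _ _,
    X1_two_mul_add_one_two_mul_add_two _ _, X1_two_mul_add_one_two_mul_add_one _ _⟩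
end

section
/- Let k ≥ 1 and r ≥ 1 be integers. Then Σ_{q=0}^{2k−1} Σ_{s=0}^{⌈q/2⌉} F(k,r,s,q) = 3(2k+2r+3)/(2k+1) − 3·(2r+3)!!·(2k−1)!!/(2k+2r+1)!!, an identity of rational numbers. -/
open Finset

/-!
Write the summand as `F = w_s · C(2k+2-q+2r, 2r) · P_s(q)` with
`P_s(q) = (2r+2s+1)·q^(2s) - 2s(2k+3-2s)·q^(2s-1)` a combination of falling factorials. This form
vanishes for `2s > q+1`, so the inner sum may run over all `s ≤ k` and the two sums can be swapped.
For fixed `s`, the sum over the full range `q ≤ 2k+2` is a Chu–Vandermonde convolution; the two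
binomials it produces cancel unless `s = 0`, which contributes `3(2k+2r+3)/(2k+1)`. What is left
are the three boundary terms `q = 2k, 2k+1, 2k+2`, which add up to
`w_s · (2k)^(2s) · C(2r+2, 2) · (2r+3)`, and summing these over `s` with the hockey-stick identity
gives the double-factorial term.
-/

/-- The hypergeometric summand
`F(k,r,s,q) = [6(2k+2r−q+2)!·q!·(r+s−1)!·(2k−2s)!·(k−s+1)
  / ((2k+2r+2)!·(2k−q+2)!·(q−2s+1)!·s!·(r−1)!)]
  · [(q−2s+1)(2r+2s+1) − 2s(2k−2s+3)]`. -/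
def Ffun (k r s q : ℕ) : ℚ :=
  ((6 * (2*k+2*r+2-q).factorial * q.factorial * (r-1+s).factorial
      * (2*k-2*s).factorial * (k+1-s) : ℕ) : ℚ)
  / (((2*k+2*r+2).factorial * (2*k+2-q).factorial * (q+1-2*s).factorial
      * s.factorial * (r-1).factorial : ℕ) : ℚ)
  * ((((q+1-2*s) * (2*r+2*s+1) : ℕ) : ℚ) - ((2*s*(2*k+3-2*s) : ℕ) : ℚ))

theorem Nat.sum_antidiagonal_choose_mul_add_choose (a b M : ℕ) :
    ∑ p ∈ antidiagonal M, p.1.choose b * (p.2 + a).choose a = (M + a + 1).choose (a + b + 1) := by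
  induction M generalizing b with
  | zero => cases b <;> simp [Nat.choose_eq_zero_of_lt]
  | succ M ih =>
    rw [Nat.sum_antidiagonal_succ, add_right_comm M 1 a, Nat.choose_succ_succ' (M + a + 1)]
    cases b with
    | zero =>
      have h := ih 0
      simp only [Nat.choose_zero_right, one_mul, add_zero] at h ⊢
      rw [h]
    | succ b =>
      simp only [Nat.choose_succ_succ' _ b, add_mul, sum_add_distrib, ih, Nat.choose_zero_succ,
        zero_mul, zero_add]
      ring_nf

theorem Nat.sum_range_descFactorial_mul_choose (a b M : ℕ) :
    ∑ q ∈ range (M + 1), q.descFactorial b * (M - q + a).choose a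
      = b.factorial * (M + a + 1).choose (a + b + 1) := by
  simp only [Nat.descFactorial_eq_factorial_mul_choose, mul_assoc, ← mul_sum]
  rw [← Nat.sum_antidiagonal_choose_mul_add_choose,
    Nat.sum_antidiagonal_eq_sum_range_succ (fun i j => i.choose b * (j + a).choose a)]

theorem Nat.sum_range_sub_mul_add_choose (c k : ℕ) :
    ∑ s ∈ range (k + 1), (k + 1 - s) * (s + c).choose c = (k + c + 2).choose (c + 2) := by
  have h := Nat.sum_antidiagonal_choose_mul_add_choose c 1 (k + 1)
  rw [← Nat.sum_antidiagonal_swap,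
    Nat.sum_antidiagonal_eq_sum_range_succ_mk, sum_range_succ] at h
  simpa [add_assoc, add_comm 1] using h

theorem Nat.factorial_mul_succ_sub_eq (q j : ℕ) (h : j ≤ q + 1) :
    q.factorial * (q + 1 - j) = q.descFactorial j * (q + 1 - j).factorial := by
  rcases h.lt_or_eq with h | rfl
  · rw [show q + 1 - j = q - j + 1 by omega, Nat.factorial_succ, ← Nat.factorial_mul_descFactorial
      (by omega : j ≤ q)]
    ring
  · simp

theorem Nat.factorial_mul_eq_mul_descFactorial_pred (q j : ℕ) (h : j ≤ q + 1) :
    q.factorial * j = j * q.descFactorial (j - 1) * (q + 1 - j).factorial := by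
  cases j with
  | zero => simp
  | succ i =>
    rw [Nat.add_sub_cancel, Nat.add_sub_add_right,
      ← Nat.factorial_mul_descFactorial (by omega : i ≤ q)]
    ring

theorem Nat.doubleFactorial_two_mul_sub_one_mul (m : ℕ) :
    (2 * m - 1).doubleFactorial * (2 ^ m * m.factorial) = (2 * m).factorial := by
  cases m with
  | zero => rfl
  | succ m =>
    rw [← Nat.doubleFactorial_two_mul, show 2 * (m + 1) = 2 * m + 1 + 1 by ring,
      Nat.factorial_eq_mul_doubleFactorial, Nat.add_sub_cancel, mul_comm]

theorem Nat.cast_doubleFactorial_two_mul_sub_one (m : ℕ) :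
    ((2 * m - 1).doubleFactorial : ℚ) = (2 * m).factorial / (2 ^ m * m.factorial) := by
  rw [eq_div_iff (by positivity)]
  exact_mod_cast Nat.doubleFactorial_two_mul_sub_one_mul m

def bracket (x j m q : ℕ) : ℚ :=
  ((x + j + 1) * q.descFactorial j : ℕ) - (j * (m + 3 - j) * q.descFactorial (j - 1) : ℕ)

theorem bracket_eq_factorial_div (x j m q : ℕ) (h : j ≤ q + 1) :
    bracket x j m q = q.factorial
      * ((((q + 1 - j) * (x + j + 1) : ℕ) : ℚ) - ((j * (m + 3 - j) : ℕ) : ℚ))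
      / (q + 1 - j).factorial := by
  have h1 := Nat.factorial_mul_succ_sub_eq q j h
  have h2 := Nat.factorial_mul_eq_mul_descFactorial_pred q j h
  rw [eq_div_iff (by positivity), bracket]
  linear_combination (norm := skip) ((m + 3 - j : ℕ) : ℚ) * congrArg (Nat.cast (R := ℚ)) h2
    - ((x + j + 1 : ℕ) : ℚ) * congrArg (Nat.cast (R := ℚ)) h1
  push_cast
  ring

theorem sum_choose_mul_bracket (x j m : ℕ) :
    ∑ q ∈ range (m + 3), ((m + 2 - q + x).choose x : ℚ) * bracket x j m q
      = if j = 0 then (((x + 1) * (m + x + 3).choose (x + 1) : ℕ) : ℚ) else 0 := by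
  have vandermonde (b c : ℕ) : ∑ q ∈ range (m + 3), ((m + 2 - q + x).choose x : ℚ)
      * (c * q.descFactorial b : ℕ) = (c * b.factorial * (m + x + 3).choose (x + b + 1) : ℕ) := by
    have := Nat.sum_range_descFactorial_mul_choose x b (m + 2)
    rw [show m + 2 + x + 1 = m + x + 3 by ring] at this
    rw [mul_assoc, ← this, mul_sum]
    push_cast
    exact sum_congr rfl fun q _ => by ring
  simp only [bracket, mul_sub, sum_sub_distrib, vandermonde]
  cases j with
  | zero => simp
  | succ i =>
    have key := Nat.choose_succ_right_eq (m + x + 3) (x + i + 1)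
    rw [show m + x + 3 - (x + i + 1) = m + 3 - (i + 1) by omega] at key
    rw [if_neg (Nat.add_one_ne_zero i), Nat.add_sub_cancel, sub_eq_zero, Nat.cast_inj,
      Nat.factorial_succ, show x + (i + 1) = x + i + 1 by ring]
    calc (x + i + 1 + 1) * ((i + 1) * i.factorial) * (m + x + 3).choose (x + i + 1 + 1)
        = (i + 1) * i.factorial * ((m + x + 3).choose (x + i + 1 + 1) * (x + i + 1 + 1)) := by ring
      _ = (i + 1) * (m + 3 - (i + 1)) * i.factorial * (m + x + 3).choose (x + i + 1) := by
        rw [key]; ring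

theorem sum_choose_mul_bracket_boundary (x j m : ℕ) (hj : j ≤ m) :
    ∑ i ∈ range 3, ((2 - i + x).choose x : ℚ) * bracket x j m (m + i)
      = m.descFactorial j * (x + 2).choose 2 * (x + 3) := by
  have h2 : ((x + 2).choose 2 : ℚ) = (x + 2) * (x + 1) / 2 := by
    rw [Nat.cast_choose_two]; push_cast; ring
  have h1 : (1 + x).choose x = x + 1 := by
    rw [add_comm, Nat.choose_symm_add, Nat.choose_one_right]
  have h0 : (2 + x).choose x = (x + 2).choose 2 := by
    rw [add_comm, Nat.choose_symm_add]
  simp only [sum_range_succ, range_zero, sum_empty, zero_add, add_zero, Nat.sub_zero, h0, h1,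
    show 2 - 1 + x = 1 + x from rfl, show 2 - 2 + x = x by omega, Nat.choose_self, bracket, h2]
  obtain ⟨u, rfl⟩ := Nat.exists_eq_add_of_le hj
  cases j with
  | zero =>
    simp only [Nat.descFactorial_zero, zero_mul, Nat.cast_zero, sub_zero]
    push_cast
    ring
  | succ i =>
    -- `q^(i+1) = (q - i) q^(i)` and `(q+1)^(i+1) = (q+1) q^(i)` tie the three values of `q^(i)`
    have hD : (i + 1 + u).descFactorial (i + 1) = (u + 1) * (i + 1 + u).descFactorial i := by
      rw [Nat.descFactorial_succ]; congr 1; omega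
    have hDE : (i + 1 + u + 1) * (i + 1 + u).descFactorial i
        = (u + 2) * (i + 1 + u + 1).descFactorial i := by
      rw [← Nat.succ_descFactorial_succ, Nat.descFactorial_succ]; congr 1; omega
    have hEH : (i + 1 + u + 2) * (i + 1 + u + 1).descFactorial i
        = (u + 3) * (i + 1 + u + 2).descFactorial i := by
      rw [← Nat.succ_descFactorial_succ, Nat.descFactorial_succ]; congr 1; omega
    simp only [Nat.add_sub_cancel, show i + 1 + u + 3 - (i + 1) = u + 3 by omega, hD,
      Nat.succ_descFactorial_succ]
    qify at hDE hEH
    push_cast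
    linear_combination (x + 1) * i * hDE + (i + 1) * hEH

def Fweight (k r s : ℕ) : ℚ :=
  ((6 * (2*r).factorial * (r-1+s).factorial * (2*k-2*s).factorial * (k+1-s) : ℕ) : ℚ)
    / (((2*k+2*r+2).factorial * s.factorial * (r-1).factorial : ℕ) : ℚ)

def Ffactored (k r s q : ℕ) : ℚ :=
  Fweight k r s * ((2*k+2-q+2*r).choose (2*r) : ℚ) * bracket (2*r) (2*s) (2*k) q

theorem Ffun_eq_Ffactored (k r s q : ℕ) (hs : 2*s ≤ q+1) (hq : q ≤ 2*k+2) :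
    Ffun k r s q = Ffactored k r s q := by
  have hfac := Nat.add_choose_mul_factorial_mul_factorial (2*k+2-q) (2*r)
  rw [show 2*k+2-q+2*r = 2*k+2*r+2-q by omega] at hfac
  unfold Ffun Ffactored Fweight
  rw [show 2*k+2-q+2*r = 2*k+2*r+2-q by omega, ← hfac, bracket_eq_factorial_div _ _ _ _ hs]
  push_cast
  field_simp

theorem Ffactored_eq_zero (k r s q : ℕ) (h : q + 1 < 2*s) : Ffactored k r s q = 0 := by
  simp [Ffactored, bracket, Nat.descFactorial_eq_zero_iff_lt.mpr (by omega : q < 2*s),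
    Nat.descFactorial_eq_zero_iff_lt.mpr (by omega : q < 2*s - 1)]

theorem Fweight_zero_mul_choose (k r : ℕ) :
    Fweight k r 0 * (((2*r+1) * (2*k+2*r+3).choose (2*r+1) : ℕ) : ℚ)
      = ((3*(2*k+2*r+3) : ℕ) : ℚ) / ((2*k+1 : ℕ) : ℚ) := by
  rw [Fweight, Nat.cast_mul (2*r+1), Nat.cast_choose ℚ (by omega : 2*r+1 ≤ 2*k+2*r+3),
    show 2*k+2*r+3 - (2*r+1) = 2*k+1+1 by omega]
  simp only [Nat.factorial_succ (2*k+2*r+2), Nat.factorial_succ (2*r), Nat.factorial_succ (2*k),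
    Nat.factorial_succ (2*k+1), Nat.mul_zero, Nat.sub_zero, Nat.add_zero, Nat.factorial_zero]
  push_cast
  field_simp
  ring

theorem Fweight_mul_descFactorial (k r s : ℕ) (hs : s ≤ k) :
    Fweight k r s * (2*k).descFactorial (2*s)
      = ((6 * (2*r).factorial * (2*k).factorial : ℕ) : ℚ) / (2*k+2*r+2).factorial
        * ((k + 1 - s) * (s + (r - 1)).choose (r - 1) : ℕ) := by
  have hd := Nat.factorial_mul_descFactorial (by omega : 2*s ≤ 2*k)
  have hc := Nat.add_choose_mul_factorial_mul_factorial s (r - 1)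
  rw [Fweight, show r - 1 + s = s + (r - 1) by omega, ← hd, ← hc]
  push_cast
  field_simp

theorem sum_Fweight_mul_descFactorial (k r : ℕ) (hr : 1 ≤ r) :
    ∑ s ∈ range (k + 1), Fweight k r s * (2*k).descFactorial (2*s)
      = ((6 * (2*r).factorial * (2*k).factorial : ℕ) : ℚ) / (2*k+2*r+2).factorial
          * (k+r+1).choose (r+1) := by
  rw [sum_congr rfl fun s hs => Fweight_mul_descFactorial k r s
    (Nat.lt_succ_iff.mp (mem_range.mp hs)), ← mul_sum, ← Nat.cast_sum,
    Nat.sum_range_sub_mul_add_choose, show k + (r - 1) + 2 = k + r + 1 by omega,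
    show r - 1 + 2 = r + 1 by omega]

theorem boundary_sum_eq_doubleFactorial (k r : ℕ) :
    ((6 * (2*r).factorial * (2*k).factorial : ℕ) : ℚ) / (2*k+2*r+2).factorial
        * (k+r+1).choose (r+1) * (2*r+2).choose 2 * (2*r+3)
      = 3 * ((2*r+3).doubleFactorial : ℚ) * ((2*k-1).doubleFactorial : ℚ)
          / ((2*k+2*r+1).doubleFactorial : ℚ) := by
  have hr := Nat.cast_doubleFactorial_two_mul_sub_one (r + 2)
  have hkr := Nat.cast_doubleFactorial_two_mul_sub_one (k + r + 1)
  rw [show 2 * (r + 2) - 1 = 2*r+3 by omega, show 2 * (r + 2) = 2*r+1+1+1+1 by ring] at hr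
  rw [show 2 * (k + r + 1) - 1 = 2*k+2*r+1 by omega,
    show 2 * (k + r + 1) = 2*k+2*r+2 by ring] at hkr
  rw [hr, hkr, Nat.cast_doubleFactorial_two_mul_sub_one, Nat.cast_choose_two,
    Nat.cast_choose ℚ (by omega : r + 1 ≤ k + r + 1), show k + r + 1 - (r + 1) = k by omega]
  simp only [Nat.factorial_succ (r + 1), Nat.factorial_succ (2*r), Nat.factorial_succ (2*r+1),
    Nat.factorial_succ (2*r+1+1), Nat.factorial_succ (2*r+1+1+1)]
  push_cast
  field_simp
  ring

theorem sum_range_Ffactored (k r s : ℕ) (hs : s ≤ k) :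
    ∑ q ∈ range (2*k), Ffactored k r s q
      = (if s = 0 then ((3*(2*k+2*r+3) : ℕ) : ℚ) / ((2*k+1 : ℕ) : ℚ) else 0)
        - Fweight k r s * (2*k).descFactorial (2*s) * ((2*r+2).choose 2 * (2*r+3)) := by
  have full : ∑ q ∈ range (2*k+3), Ffactored k r s q
      = if s = 0 then ((3*(2*k+2*r+3) : ℕ) : ℚ) / ((2*k+1 : ℕ) : ℚ) else 0 := by
    simp only [Ffactored, mul_assoc, ← mul_sum, sum_choose_mul_bracket, mul_eq_zero,
      OfNat.ofNat_ne_zero, false_or]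
    split_ifs with h
    · subst h
      simpa using Fweight_zero_mul_choose k r
    · rw [mul_zero]
  have boundary : ∑ i ∈ range 3, Ffactored k r s (2*k + i)
      = Fweight k r s * (2*k).descFactorial (2*s) * ((2*r+2).choose 2 * (2*r+3)) := by
    have h := sum_choose_mul_bracket_boundary (2*r) (2*s) (2*k) (by omega)
    simp only [Ffactored, mul_assoc, ← mul_sum, Nat.add_sub_add_left]
    rw [h]
    push_cast
    ring
  rw [sum_range_add] at full
  rw [← full, ← boundary, add_sub_cancel_right]

theorem stmt9_general (k r : ℕ) (hr : 1 ≤ r) :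
    ∑ q ∈ Finset.range (2*k), ∑ s ∈ Finset.range ((q+1)/2 + 1), Ffun k r s q
      = ((3*(2*k+2*r+3) : ℕ) : ℚ) / ((2*k+1 : ℕ) : ℚ)
        - 3 * ((2*r+3).doubleFactorial : ℚ) * ((2*k-1).doubleFactorial : ℚ)
            / ((2*k+2*r+1).doubleFactorial : ℚ) := by
  have extend : ∀ q ∈ range (2*k), ∑ s ∈ range ((q+1)/2 + 1), Ffun k r s q
      = ∑ s ∈ range (k+1), Ffactored k r s q := by
    intro q hq
    have hq := mem_range.mp hq
    rw [sum_congr rfl fun s hs => Ffun_eq_Ffactored k r s q (by grind) (by omega)]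
    exact sum_subset (range_subset_range.mpr (by omega)) fun s _ hs =>
      Ffactored_eq_zero k r s q (by grind)
  rw [sum_congr rfl extend, sum_comm,
    sum_congr rfl fun s hs => sum_range_Ffactored k r s (by grind), sum_sub_distrib,
    sum_ite_eq', if_pos (by simp), ← sum_mul, sum_Fweight_mul_descFactorial k r hr, ← mul_assoc,
    boundary_sum_eq_doubleFactorial]

theorem stmt9 (k r : ℕ) (hk : 1 ≤ k) (hr : 1 ≤ r) :
    ∑ q ∈ Finset.range (2*k), ∑ s ∈ Finset.range ((q+1)/2 + 1), Ffun k r s q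
      = ((3*(2*k+2*r+3) : ℕ) : ℚ) / ((2*k+1 : ℕ) : ℚ)
        - 3 * ((2*r+3).doubleFactorial : ℚ) * ((2*k-1).doubleFactorial : ℚ)
            / ((2*k+2*r+1).doubleFactorial : ℚ) :=
  stmt9_general k r hr
end

section
/- Let k ≥ 1, r ≥ 1 and 1 ≤ s ≤ k be integers. Then Σ_{q=2s−1}^{2k−1} F(k,r,s,q) = [−3·(2k)!·(2r+3)! / ((r−1)!·(2k+2r+2)!)] · [(k+1−s)·(r−1+s)!/s!], an identity of rational numbers. -/
/-! With `d = 2k - 2s`, `m = 2s`, `R = 2r` and `i = q + 1 - 2s`, the summand `F(k,r,s,q)` is a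
constant multiple of the hypergeometric term `gosperTerm d m R i`. For all `m ≥ 1`, `d` and `R`,
Gosper's algorithm yields an antidifference `gosperAntidiff` of this term that vanishes at `i = 0`,
so the sum telescopes to its value at `i = d + 1`. -/

open Finset Nat

def gosperTerm (d m R i : ℕ) : ℚ :=
  (d + R + 3 - i)! * (m - 1 + i)! / ((d + 3 - i)! * i !) * (i * (R + m + 1) - m * (d + 3))

def gosperAntidiff (d m R i : ℕ) : ℚ :=
  i * (i - d - R - 4) * (d + R + 3 - i)! * (m - 1 + i)! / ((d + 3 - i)! * i !)

section Gosper

variable {d m R : ℕ}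

theorem gosperAntidiff_zero : gosperAntidiff d m R 0 = 0 := by
  simp [gosperAntidiff]

theorem gosperAntidiff_succ_sub_self (hm : 1 ≤ m) {i : ℕ} (hi : i ≤ d) :
    gosperAntidiff d m R (i + 1) - gosperAntidiff d m R i = gosperTerm d m R i := by
  obtain ⟨A, rfl⟩ : ∃ A, d = i + A := ⟨d - i, by omega⟩
  obtain ⟨p, rfl⟩ : ∃ p, m = p + 1 := ⟨m - 1, by omega⟩
  unfold gosperAntidiff gosperTerm
  rw [show i + A + R + 3 - (i + 1) = A + R + 2 by omega,
    show i + A + R + 3 - i = A + R + 3 by omega, show i + A + 3 - (i + 1) = A + 2 by omega,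
    show i + A + 3 - i = A + 3 by omega,
    show p + 1 - 1 + (i + 1) = p + i + 1 by omega, show p + 1 - 1 + i = p + i by omega]
  push_cast [Nat.factorial_succ]
  field_simp
  ring

theorem gosperAntidiff_last (hm : 1 ≤ m) :
    gosperAntidiff d m R (d + 1) = -((m + d)! * (R + 3)! / (2 * d !)) := by
  unfold gosperAntidiff
  rw [show d + R + 3 - (d + 1) = R + 2 by omega, show m - 1 + (d + 1) = m + d by omega,
    show d + 3 - (d + 1) = 2 by omega]
  push_cast [Nat.factorial_succ]
  field_simp
  ring

theorem sum_range_gosperTerm (hm : 1 ≤ m) :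
    ∑ i ∈ range (d + 1), gosperTerm d m R i = -((m + d)! * (R + 3)! / (2 * d !)) := by
  rw [← sum_congr rfl fun i hi => gosperAntidiff_succ_sub_self hm (mem_range_succ_iff.mp hi),
    sum_range_sub, gosperAntidiff_last hm, gosperAntidiff_zero, sub_zero]

end Gosper

theorem Ffun_eq_mul_gosperTerm {k r s i : ℕ} (hs : 1 ≤ s) (hsk : s ≤ k) :
    Ffun k r s (2 * s - 1 + i)
      = 6 * (r - 1 + s)! * (2 * k - 2 * s)! * (k + 1 - s : ℕ)
          / ((2 * k + 2 * r + 2)! * s ! * (r - 1)!)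
        * gosperTerm (2 * k - 2 * s) (2 * s) (2 * r) i := by
  unfold Ffun gosperTerm
  rw [show 2 * k + 2 * r + 2 - (2 * s - 1 + i) = 2 * k - 2 * s + 2 * r + 3 - i by omega,
    show 2 * k + 2 - (2 * s - 1 + i) = 2 * k - 2 * s + 3 - i by omega,
    show 2 * s - 1 + i + 1 - 2 * s = i by omega,
    show 2 * k + 3 - 2 * s = 2 * k - 2 * s + 3 by omega]
  push_cast
  field_simp

theorem stmt10_general (k r s : ℕ) (hs1 : 1 ≤ s) (hsk : s ≤ k) :
    ∑ q ∈ Finset.Icc (2*s-1) (2*k-1), Ffun k r s q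
      = (-3 * ((2*k).factorial : ℚ) * ((2*r+3).factorial : ℚ)
          / (((r-1).factorial : ℚ) * ((2*k+2*r+2).factorial : ℚ)))
        * (((k+1-s : ℕ) : ℚ) * ((r-1+s).factorial : ℚ) / (s.factorial : ℚ)) := by
  rw [← Ico_add_one_right_eq_Icc, sum_Ico_eq_sum_range,
    show 2 * k - 1 + 1 - (2 * s - 1) = 2 * k - 2 * s + 1 by omega,
    sum_congr rfl fun i _ => Ffun_eq_mul_gosperTerm hs1 hsk,
    ← mul_sum, sum_range_gosperTerm (by omega), show 2 * s + (2 * k - 2 * s) = 2 * k by omega]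
  field_simp
  ring

theorem stmt10 (k r s : ℕ) (hk : 1 ≤ k) (hr : 1 ≤ r) (hs1 : 1 ≤ s) (hsk : s ≤ k) :
    ∑ q ∈ Finset.Icc (2*s-1) (2*k-1), Ffun k r s q
      = (-3 * ((2*k).factorial : ℚ) * ((2*r+3).factorial : ℚ)
          / (((r-1).factorial : ℚ) * ((2*k+2*r+2).factorial : ℚ)))
        * (((k+1-s : ℕ) : ℚ) * ((r-1+s).factorial : ℚ) / (s.factorial : ℚ)) :=
  stmt10_general k r s hs1 hsk
end

section
/- For all integers k ≥ 1 and r ≥ 1, Σ_{s=0}^{k} [−3·(2k)!·(2r+3)!·(k+1−s)·(r−1+s)! / ((r−1)!·(2k+2r+2)!·s!)] = −3·(2k−1)!!·(2r+3)!!/(2k+2r+1)!!, an identity of rational numbers. -/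
/-!
Writing `m = r - 1`, the summand is a constant times `(k + 1 - s) * C(m + s, m)`, and induction on
`k` with the hockey-stick identity gives `∑ (k + 1 - s) * C(m + s, m) = C(k + m + 2, m + 2)`.
Expressing every factorial through double factorials via `(2n)! = 2ⁿ n! (2n - 1)‼` and
`(2n + 1)! = 2ⁿ n! (2n + 1)‼`, the powers of two and the ordinary factorials cancel.
-/

open Finset Nat

theorem Nat.sum_range_succ_sub_mul_add_choose (k m : ℕ) :
    ∑ s ∈ range (k + 1), (k + 1 - s) * (m + s).choose m = (k + m + 2).choose (m + 2) := by
  induction k with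
  | zero => simp
  | succ k ih =>
    have hsplit : ∑ s ∈ range (k + 2), (k + 2 - s) * (m + s).choose m
        = ∑ s ∈ range (k + 2), (k + 1 - s) * (m + s).choose m
          + ∑ s ∈ range (k + 2), (s + m).choose m := by
      rw [← sum_add_distrib]
      refine sum_congr rfl fun s hs => ?_
      rw [show k + 2 - s = k + 1 - s + 1 by have := mem_range.1 hs; omega, add_mul, one_mul,
        add_comm s]
    rw [hsplit, sum_range_succ, Nat.sub_self, zero_mul, add_zero, ih, sum_range_add_choose,
      show k + 1 + m + 1 = k + m + 2 by ring, show k + 1 + m + 2 = k + m + 2 + 1 by ring, add_comm]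
    exact (choose_succ_succ' (k + m + 2) (m + 1)).symm

-- At `n = 0` the truncated `2 * 0 - 1 = 0` still gives the right value `0‼ = 1`.
theorem Nat.factorial_two_mul_eq (n : ℕ) : (2 * n)! = 2 ^ n * n ! * (2 * n - 1)‼ := by
  cases n with
  | zero => rfl
  | succ n =>
    rw [show 2 * (n + 1) = 2 * n + 1 + 1 by ring, factorial_eq_mul_doubleFactorial,
      show 2 * n + 1 + 1 = 2 * (n + 1) by ring, doubleFactorial_two_mul,
      show 2 * (n + 1) - 1 = 2 * n + 1 by omega]

theorem Nat.factorial_two_mul_add_one_eq (n : ℕ) : (2 * n + 1)! = 2 ^ n * n ! * (2 * n + 1)‼ := by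
  rw [factorial_eq_mul_doubleFactorial, doubleFactorial_two_mul, mul_comm]

theorem stmt11_general (k r : ℕ) (hr : 1 ≤ r) :
    ∑ s ∈ Finset.range (k+1),
      (-3 * ((2*k).factorial : ℚ) * ((2*r+3).factorial : ℚ)
          * ((k+1-s : ℕ) : ℚ) * ((r-1+s).factorial : ℚ))
        / (((r-1).factorial : ℚ) * ((2*k+2*r+2).factorial : ℚ) * (s.factorial : ℚ))
      = -3 * ((2*k-1).doubleFactorial : ℚ) * ((2*r+3).doubleFactorial : ℚ)
          / ((2*k+2*r+1).doubleFactorial : ℚ) := by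
  obtain ⟨m, rfl⟩ : ∃ m, r = m + 1 := ⟨r - 1, by omega⟩
  simp only [Nat.add_sub_cancel]
  have hsum : ∑ s ∈ range (k + 1), ((k + 1 - s : ℕ) : ℚ) * ((m + s)! / (m ! * s !))
      = (k + m + 2)! / ((m + 2)! * k !) := by
    rw [show k + m + 2 = m + 2 + k by ring, ← cast_add_choose, show m + 2 + k = k + m + 2 by ring,
      ← sum_range_succ_sub_mul_add_choose, cast_sum]
    refine sum_congr rfl fun s _ => ?_
    rw [cast_mul, cast_add_choose]
  calc _ = -3 * ((2 * k)! : ℚ) * (2 * (m + 2) + 1)! / (2 * (k + m + 2))!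
        * ∑ s ∈ range (k + 1), ((k + 1 - s : ℕ) : ℚ) * ((m + s)! / (m ! * s !)) := by
        rw [mul_sum]
        refine sum_congr rfl fun s _ => ?_
        rw [show 2 * (m + 2) + 1 = 2 * (m + 1) + 3 by ring,
          show 2 * (k + m + 2) = 2 * k + 2 * (m + 1) + 2 by ring]
        field_simp
    _ = _ := by
        rw [hsum, factorial_two_mul_eq, factorial_two_mul_eq, factorial_two_mul_add_one_eq,
          show 2 * (k + m + 2) - 1 = 2 * k + 2 * (m + 1) + 1 by omega,
          show 2 * (m + 2) + 1 = 2 * (m + 1) + 3 by ring]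
        push_cast
        field_simp
        ring

theorem stmt11 (k r : ℕ) (hk : 1 ≤ k) (hr : 1 ≤ r) :
    ∑ s ∈ Finset.range (k+1),
      (-3 * ((2*k).factorial : ℚ) * ((2*r+3).factorial : ℚ)
          * ((k+1-s : ℕ) : ℚ) * ((r-1+s).factorial : ℚ))
        / (((r-1).factorial : ℚ) * ((2*k+2*r+2).factorial : ℚ) * (s.factorial : ℚ))
      = -3 * ((2*k-1).doubleFactorial : ℚ) * ((2*r+3).doubleFactorial : ℚ)
          / ((2*k+2*r+1).doubleFactorial : ℚ) :=
  stmt11_general k r hr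
end

section
/- Let k ≥ 0 and let T be an increasing tree on the vertex set {0,1,…,2k}. Then Σ_{i=0}^{2k} n_i(T) = 2k, where n_i(T) is the number of connected components with an even number of vertices of the forest obtained by deleting vertex i from T. (Equivalently, every tree monomial x^T = ∏_i x_i^{n_i(T)} has total degree 2k.) -/
open Finset

/-- An increasing tree on the vertex set `{0,1,…,M}`, encoded by recording,
for each vertex `i+1` (with `i : Fin M`), its parent, which is a smaller
vertex (an element of `{0,…,i}`, i.e. of `Fin (i+1)`). -/
abbrev IncTree (M : ℕ) := (i : Fin M) → Fin ((i : ℕ) + 1)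

/-- The parent function of an increasing tree, as a function `ℕ → ℕ`
(vertices outside `{1,…,M}` are sent to `0`). -/
def parentFn {M : ℕ} (T : IncTree M) (v : ℕ) : ℕ :=
  if h : 1 ≤ v ∧ v ≤ M then (T ⟨v - 1, by omega⟩ : ℕ) else 0

/-- `v` is a descendant of `u` (equal to `u`, or in the subtree below `u`). -/
def isDesc {M : ℕ} (T : IncTree M) (u v : ℕ) : Prop :=
  ∃ t : ℕ, (parentFn T)^[t] v = u

open scoped Classical in
/-- The number of vertices of `{0,…,M}` in the subtree below `u` (including `u`). -/
noncomputable def subtreeCard {M : ℕ} (T : IncTree M) (u : ℕ) : ℕ :=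
  ((Finset.range (M+1)).filter (fun v => isDesc T u v)).card

open scoped Classical in
/-- `nVal T i` is the number of connected components with an even number of
vertices of the forest obtained by deleting vertex `i` from `T`:  one
component (the subtree of `c`) for each child `c` of `i`, plus, when `i ≠ 0`,
the component containing the root, which has `M + 1 - subtreeCard T i`
vertices. -/
noncomputable def nVal {M : ℕ} (T : IncTree M) (i : ℕ) : ℕ :=
  ((Finset.Icc 1 M).filter
      (fun c => parentFn T c = i ∧ Even (subtreeCard T c))).card
  + (if i ≠ 0 ∧ Even (M + 1 - subtreeCard T i) then 1 else 0)

lemma parent_lt {M : ℕ} (T : IncTree M) {c : ℕ} (h1 : 1 ≤ c) (h2 : c ≤ M) :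
    parentFn T c < c := by
  unfold parentFn
  rw [dif_pos ⟨h1, h2⟩]
  have h := (T ⟨c - 1, by omega⟩).isLt
  simp only [Fin.val_mk] at h
  omega

lemma subtree_pos {M : ℕ} (T : IncTree M) {i : ℕ} (h : i ≤ M) :
    1 ≤ subtreeCard T i := by
  classical
  unfold subtreeCard
  apply Finset.card_pos.mpr
  exact ⟨i, Finset.mem_filter.mpr ⟨Finset.mem_range.mpr (by omega), ⟨0, rfl⟩⟩⟩

lemma subtree_le {M : ℕ} (T : IncTree M) (i : ℕ) :
    subtreeCard T i ≤ M + 1 := by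
  classical
  unfold subtreeCard
  exact (Finset.card_filter_le _ _).trans (by simp)

theorem stmt13 (k : ℕ) (T : IncTree (2*k)) :
    ∑ i ∈ Finset.range (2*k+1), nVal T i = 2*k := by
  classical
  suffices h : ∀ M, Even M → ∀ T : IncTree M,
      ∑ i ∈ Finset.range (M+1), nVal T i = M from h (2*k) ⟨k, by omega⟩ T
  intro M hMeven T
  calc ∑ i ∈ Finset.range (M+1), nVal T i
      = (∑ i ∈ Finset.range (M+1), ((Finset.Icc 1 M).filter
            (fun c => parentFn T c = i ∧ Even (subtreeCard T c))).card)
        + ∑ i ∈ Finset.range (M+1),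
            (if i ≠ 0 ∧ Even (M + 1 - subtreeCard T i) then 1 else 0) := by
        simp only [nVal]
        rw [Finset.sum_add_distrib]
    _ = ((Finset.Icc 1 M).filter (fun c => Even (subtreeCard T c))).card
        + ((Finset.Icc 1 M).filter (fun i => ¬ Even (subtreeCard T i))).card := by
        congr 1
        · simp only [Finset.card_filter]
          rw [Finset.sum_comm]
          apply Finset.sum_congr rfl
          intro c hc
          rw [Finset.mem_Icc] at hc
          have hp : parentFn T c < M + 1 := by
            have := parent_lt T hc.1 hc.2; omega
          by_cases he : Even (subtreeCard T c)
          · simp only [he, and_true]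
            rw [Finset.sum_ite_eq (Finset.range (M+1)) (parentFn T c) (fun _ => 1)]
            simp [Finset.mem_range.mpr hp]
          · simp [he]
        · rw [← Finset.card_filter]
          apply Finset.card_bij (fun i _ => i)
          · intro i hi
            simp only [Finset.mem_filter, Finset.mem_range] at hi
            obtain ⟨hiR, hi0, hiE⟩ := hi
            have h1 : 1 ≤ subtreeCard T i := subtree_pos T (by omega)
            have h2 : subtreeCard T i ≤ M + 1 := subtree_le T i
            rw [Nat.even_sub h2] at hiE
            have hodd : ¬ Even (M + 1) := by
              rcases hMeven with ⟨m, hm⟩; simp [hm, Nat.even_add_one, parity_simps]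
            simp only [Finset.mem_filter, Finset.mem_Icc]
            exact ⟨⟨by omega, by omega⟩, fun h => hodd (hiE.mpr h)⟩
          · intro a b _ _ h; exact h
          · intro b hb
            simp only [Finset.mem_filter, Finset.mem_Icc] at hb
            obtain ⟨⟨hb1, hb2⟩, hbE⟩ := hb
            refine ⟨b, ?_, rfl⟩
            have h2 : subtreeCard T b ≤ M + 1 := subtree_le T b
            have hodd : ¬ Even (M + 1) := by
              rcases hMeven with ⟨m, hm⟩; simp [hm, Nat.even_add_one, parity_simps]
            simp only [Finset.mem_filter, Finset.mem_range]
            refine ⟨by omega, by omega, ?_⟩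
            rw [Nat.even_sub h2]
            exact ⟨fun h => absurd h hodd, fun h => absurd h hbE⟩
    _ = (Finset.Icc 1 M).card := Finset.card_filter_add_card_filter_not _
    _ = M := by rw [Nat.card_Icc]; omega
end

section
/- For every integer k ≥ 0, the tree polynomial evaluated at 2k+1 arguments all equal to 1 satisfies T_k(1, 1, …, 1) = (2k)!. -/
open Finset

/-- Partial sums of block sizes: `psum k n t = n 0 + ⋯ + n (t-1)`. -/
def psum (k : ℕ) (n : Fin (2*k+1) → ℕ) (t : ℕ) : ℕ :=
  ∑ i : Fin (2*k+1), if (i : ℕ) < t then n i else 0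

/-- Total number of letters `N = n 0 + ⋯ + n (2k)`. -/
def Nval (k : ℕ) (n : Fin (2*k+1) → ℕ) : ℕ := ∑ i, n i

/-- `σ` is a cyclic shuffle for the block sizes `n`:
(1) `σ` fixes the first position, (2) `σ` is strictly increasing on each
block, (3) if the image of a position lies strictly between the images of
the first and last positions of a block (other than block 0), then that
position belongs to that block or a later one. -/
def IsCyclicShuffle (k : ℕ) (n : Fin (2*k+1) → ℕ)
    (σ : Equiv.Perm (Fin (Nval k n))) : Prop :=
  (∀ x : Fin (Nval k n), (x : ℕ) = 0 → ((σ x : Fin (Nval k n)) : ℕ) = 0) ∧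
  (∀ i : Fin (2*k+1), ∀ x y : Fin (Nval k n),
      psum k n i ≤ (x : ℕ) → (y : ℕ) < psum k n ((i : ℕ)+1) → (x : ℕ) < (y : ℕ) →
      ((σ x : Fin (Nval k n)) : ℕ) < ((σ y : Fin (Nval k n)) : ℕ)) ∧
  (∀ i : Fin (2*k+1), 1 ≤ (i : ℕ) →
    ∀ a b j : Fin (Nval k n), (a : ℕ) = psum k n i →
      (b : ℕ) + 1 = psum k n ((i : ℕ)+1) →
      ((σ a : Fin (Nval k n)) : ℕ) < ((σ j : Fin (Nval k n)) : ℕ) →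
      ((σ j : Fin (Nval k n)) : ℕ) < ((σ b : Fin (Nval k n)) : ℕ) →
      psum k n i ≤ (j : ℕ))

/-- Selections: one letter out of each of the `2k+1` blocks. -/
def Selections (k : ℕ) (n : Fin (2*k+1) → ℕ) :
    Finset (Fin (2*k+1) → Fin (Nval k n)) :=
  Finset.univ.filter (fun j => ∀ t : Fin (2*k+1),
    psum k n t ≤ ((j t : Fin (Nval k n)) : ℕ) ∧
    ((j t : Fin (Nval k n)) : ℕ) < psum k n ((t : ℕ)+1))

/-- The selected sign: sign of the permutation of `{0,…,2k}` that sorts the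
values `σ (j t)`; computed as `(-1)` to the number of inversions. -/
def selSign (k : ℕ) (n : Fin (2*k+1) → ℕ) (σ : Equiv.Perm (Fin (Nval k n)))
    (j : Fin (2*k+1) → Fin (Nval k n)) : ℤ :=
  (-1) ^ ((Finset.univ.filter (fun p : Fin (2*k+1) × Fin (2*k+1) =>
      p.1 < p.2 ∧ ((σ (j p.2) : Fin (Nval k n)) : ℕ) < ((σ (j p.1) : Fin (Nval k n)) : ℕ))).card)

open scoped Classical in
/-- The tree polynomial value `T_k(n_0,…,n_{2k})`: the sum over all cyclic
shuffles `σ` of `sgn σ` times the sum of the selected signs. -/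
noncomputable def treePoly (k : ℕ) (n : Fin (2*k+1) → ℕ) : ℤ :=
  ∑ σ ∈ Finset.univ.filter (IsCyclicShuffle k n),
    ((Equiv.Perm.sign σ : ℤˣ) : ℤ) * ∑ j ∈ Selections k n, selSign k n σ j

/-! ### Auxiliary lemmas -/

lemma Nval_one (k : ℕ) : Nval k (fun _ => 1) = 2*k+1 := by simp [Nval]

lemma psum_one (k t : ℕ) (ht : t ≤ 2*k+1) : psum k (fun _ => 1) t = t := by
  unfold psum
  rw [Fin.sum_univ_eq_sum_range (fun i => if i < t then 1 else 0) (2*k+1),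
    ← Finset.sum_filter]
  have : (Finset.range (2*k+1)).filter (· < t) = Finset.range t := by
    ext x; simp; omega
  rw [this, Finset.sum_const, Finset.card_range, smul_eq_mul, mul_one]

lemma sign_eq_signAux' {m : ℕ} (π : Equiv.Perm (Fin m)) :
    Equiv.Perm.sign π = Equiv.Perm.signAux π := by
  refine Equiv.Perm.swap_induction_on π ?_ ?_
  · simp [Equiv.Perm.signAux_one]
  · intro f x y hxy ih
    rw [map_mul, Equiv.Perm.signAux_mul, Equiv.Perm.signAux_swap hxy,
      Equiv.Perm.sign_swap hxy, ih]

lemma sign_eq_inversions {m : ℕ} (π : Equiv.Perm (Fin m)) :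
    ((Equiv.Perm.sign π : ℤˣ) : ℤ) =
    (-1) ^ ((Finset.univ.filter (fun p : Fin m × Fin m =>
      p.1 < p.2 ∧ π p.2 < π p.1)).card) := by
  rw [sign_eq_signAux']
  unfold Equiv.Perm.signAux
  rw [Finset.prod_ite, Finset.prod_const, Finset.prod_const, one_pow, mul_one]
  push_cast
  congr 1
  refine Finset.card_bij (fun x _ => (x.2, x.1)) ?_ ?_ ?_
  · rintro ⟨a, b⟩ hx
    simp only [Finset.mem_filter, Equiv.Perm.mem_finPairsLT] at hx
    simp only [Finset.mem_filter, Finset.mem_univ, true_and]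
    exact ⟨hx.1, lt_of_le_of_ne hx.2 (fun h => (ne_of_lt hx.1).symm (π.injective h))⟩
  · rintro ⟨a, b⟩ h1 ⟨c, d⟩ h2 h
    simp only [Prod.mk.injEq] at h
    exact Sigma.ext h.2 (heq_of_eq h.1)
  · rintro ⟨a, b⟩ hp
    simp only [Finset.mem_filter, Finset.mem_univ, true_and] at hp
    exact ⟨⟨b, a⟩, by simp [Equiv.Perm.mem_finPairsLT, hp.1, hp.2.le], rfl⟩

lemma card_fix_zero (m : ℕ) :
    (Finset.univ.filter (fun σ : Equiv.Perm (Fin (m+1)) => σ 0 = 0)).card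
      = m.factorial := by
  classical
  have : (Finset.univ.filter (fun σ : Equiv.Perm (Fin (m+1)) => σ 0 = 0))
      = Finset.univ.image (fun π : Equiv.Perm (Fin m) =>
          Equiv.Perm.decomposeFin.symm (0, π)) := by
    ext σ
    simp only [Finset.mem_filter, Finset.mem_univ, true_and, Finset.mem_image]
    constructor
    · intro h0
      refine ⟨(Equiv.Perm.decomposeFin σ).2, ?_⟩
      have hσ : Equiv.Perm.decomposeFin.symm (Equiv.Perm.decomposeFin σ) = σ :=
        Equiv.symm_apply_apply _ _
      have h1 : (Equiv.Perm.decomposeFin σ).1 = 0 := by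
        have := Equiv.Perm.decomposeFin_symm_apply_zero
          (Equiv.Perm.decomposeFin σ).1 (Equiv.Perm.decomposeFin σ).2
        rw [Prod.mk.eta, hσ, h0] at this
        exact this.symm
      rw [← h1, Prod.mk.eta, hσ]
    · rintro ⟨π, rfl⟩
      exact Equiv.Perm.decomposeFin_symm_apply_zero 0 π
  rw [this, Finset.card_image_of_injective _
    (fun a b h => by simpa using (Equiv.injective _ h : ((0:Fin (m+1)), a) = (0, b))),
    Finset.card_univ, Fintype.card_perm, Fintype.card_fin]

theorem stmt15 (k : ℕ) :
    treePoly k (fun _ => 1) = ((2*k).factorial : ℤ) := by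
  classical
  have hN : Nval k (fun _ => 1) = 2*k+1 := Nval_one k
  set N := Nval k (fun _ => 1) with hNdef
  let e : Fin N ≃ Fin (2*k+1) := finCongr hN
  let z : Fin N := ⟨0, by omega⟩
  let j₀ : Fin (2*k+1) → Fin N := fun t => ⟨(t : ℕ), by omega⟩
  -- Selections is a singleton
  have hSel : Selections k (fun _ => 1) = {j₀} := by
    ext j
    simp only [Selections, Finset.mem_filter, Finset.mem_univ, true_and,
      Finset.mem_singleton]
    constructor
    · intro h
      funext t
      have ht := h t
      rw [psum_one k t t.isLt.le, psum_one k ((t:ℕ)+1) t.isLt] at ht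
      exact Fin.ext (by simp only [j₀]; omega)
    · rintro rfl t
      rw [psum_one k t t.isLt.le, psum_one k ((t:ℕ)+1) t.isLt]
      exact ⟨le_refl _, Nat.lt_succ_self _⟩
  -- cyclic shuffles are precisely the permutations fixing z
  have hICS : ∀ σ : Equiv.Perm (Fin N), IsCyclicShuffle k (fun _ => 1) σ ↔ σ z = z := by
    intro σ
    constructor
    · intro h
      exact Fin.ext (h.1 z rfl)
    · intro h
      refine ⟨?_, ?_, ?_⟩
      · intro x hx
        have : x = z := Fin.ext hx
        rw [this, h]
      · intro i x y hx hy hxy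
        rw [psum_one k i i.isLt.le] at hx
        rw [psum_one k ((i:ℕ)+1) i.isLt] at hy
        omega
      · intro i hi a b j ha hb h1 h2
        rw [psum_one k i i.isLt.le] at ha ⊢
        rw [psum_one k ((i:ℕ)+1) i.isLt] at hb
        have hab : a = b := Fin.ext (by omega)
        rw [hab] at h1
        omega
  -- each summand equals 1
  have hterm : ∀ σ : Equiv.Perm (Fin N),
      ((Equiv.Perm.sign σ : ℤˣ) : ℤ) * ∑ j ∈ Selections k (fun _ => 1),
        selSign k (fun _ => 1) σ j = 1 := by
    intro σ
    rw [hSel, Finset.sum_singleton]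
    have hval : ∀ p : Fin (2*k+1), ((σ (j₀ p) : Fin N) : ℕ) = ((e.permCongr σ) p : ℕ) := by
      intro p
      have h2 : e.symm p = j₀ p := Fin.ext (by simp [e, j₀])
      rw [Equiv.permCongr_apply, h2]
      simp [e]
    have hsel : selSign k (fun _ => 1) σ j₀ = ((Equiv.Perm.sign (e.permCongr σ) : ℤˣ) : ℤ) := by
      have hf : (Finset.univ.filter (fun p : Fin (2*k+1) × Fin (2*k+1) =>
            p.1 < p.2 ∧ ((σ (j₀ p.2) : Fin N) : ℕ) < ((σ (j₀ p.1) : Fin N) : ℕ)))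
          = Finset.univ.filter (fun p : Fin (2*k+1) × Fin (2*k+1) =>
            p.1 < p.2 ∧ (e.permCongr σ) p.2 < (e.permCongr σ) p.1) := by
        refine Finset.filter_congr ?_
        intro p _
        rw [hval p.1, hval p.2]
        exact and_congr Iff.rfl Fin.lt_def.symm
      unfold selSign
      rw [hf, sign_eq_inversions]
    rw [hsel, Equiv.Perm.sign_permCongr, ← Units.val_mul, Int.units_mul_self, Units.val_one]
  -- put everything together
  unfold treePoly
  rw [Finset.sum_congr rfl (fun σ _ => hterm σ), Finset.sum_const, nsmul_eq_mul, mul_one]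
  have hfilter : Finset.univ.filter (IsCyclicShuffle k (fun _ => 1))
      = Finset.univ.filter (fun σ : Equiv.Perm (Fin N) => σ z = z) := by
    apply Finset.filter_congr
    intro σ _
    exact hICS σ
  rw [hfilter]
  -- transfer the count to `Fin (2*k+1)`
  have hcard : (Finset.univ.filter (fun σ : Equiv.Perm (Fin N) => σ z = z)).card
      = (Finset.univ.filter (fun τ : Equiv.Perm (Fin (2*k+1)) => τ 0 = 0)).card := by
    refine Finset.card_bij (fun σ _ => e.permCongr σ) ?_ ?_ ?_
    · intro σ hσ
      simp only [Finset.mem_filter, Finset.mem_univ, true_and] at hσ ⊢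
      have hz : e.symm 0 = z := Fin.ext (by simp [e, z])
      rw [Equiv.permCongr_apply, hz, hσ]
      exact Fin.ext (by simp [e, z])
    · intro a _ b _ h
      exact (Equiv.injective e.permCongr) h
    · intro τ hτ
      simp only [Finset.mem_filter, Finset.mem_univ, true_and] at hτ
      refine ⟨e.permCongr.symm τ, ?_, Equiv.apply_symm_apply _ _⟩
      simp only [Finset.mem_filter, Finset.mem_univ, true_and]
      have hz : e z = 0 := Fin.ext (by simp [e, z])
      simp only [Equiv.permCongr_symm, Equiv.permCongr_apply, Equiv.symm_symm]
      rw [hz, hτ]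
      exact Fin.ext (by simp [e, z])
  rw [hcard, card_fix_zero]
end

section
/- For every integer k ≥ 1, the following identity holds in the polynomial ring ℤ[x]: Σ_T x^{n_0(T)} = (2k−1)!! · (x+1)(x+3)⋯(x+2k−1), where the sum is over all increasing trees T on the vertex set {0,1,…,2k}, n_0(T) is the number of connected components with an even number of vertices of the forest obtained by deleting the root 0 from T, and the product has the k factors x+2j−1 for j = 1,…,k. -/
open Finset

/-! ### basic API -/

namespace MyAux

variable {M : ℕ}

lemma pf_lt (T : IncTree M) {v : ℕ} (hv : 1 ≤ v) : parentFn T v < v := by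
  unfold parentFn
  split
  · rename_i h
    calc (T ⟨v - 1, by omega⟩ : ℕ) < (v - 1) + 1 := (T _).isLt
      _ ≤ v := by omega
  · omega

lemma pf_le (T : IncTree M) (v : ℕ) : parentFn T v ≤ v := by
  rcases Nat.eq_zero_or_pos v with h | h
  · subst h; unfold parentFn; simp
  · exact (pf_lt T h).le

lemma pf_zero (T : IncTree M) : parentFn T 0 = 0 := by
  unfold parentFn; simp

lemma pf_big (T : IncTree M) {v : ℕ} (h : M < v) : parentFn T v = 0 := by
  unfold parentFn
  rw [dif_neg]; omega

lemma pf_le_M (T : IncTree M) (v : ℕ) : parentFn T v ≤ M := by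
  rcases le_or_gt v M with h | h
  · exact (pf_le T v).trans h
  · rw [pf_big T h]; omega

lemma iter_zero (T : IncTree M) (t : ℕ) : (parentFn T)^[t] 0 = 0 := by
  induction t with
  | zero => rfl
  | succ t ih => rw [Function.iterate_succ_apply, pf_zero, ih]

lemma iter_le (T : IncTree M) (t v : ℕ) : (parentFn T)^[t] v ≤ v := by
  induction t with
  | zero => simp
  | succ t ih =>
      rw [Function.iterate_succ_apply']
      exact (pf_le T _).trans ih

lemma isDesc_refl (T : IncTree M) (v : ℕ) : isDesc T v v := ⟨0, rfl⟩

lemma isDesc_le {T : IncTree M} {u v : ℕ} (h : isDesc T u v) : u ≤ v := by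
  obtain ⟨t, ht⟩ := h
  simpa [ht] using iter_le T t v

lemma isDesc_trans {T : IncTree M} {a b v : ℕ} (h1 : isDesc T a b)
    (h2 : isDesc T b v) : isDesc T a v := by
  obtain ⟨s, hs⟩ := h1
  obtain ⟨t, ht⟩ := h2
  exact ⟨s + t, by rw [Function.iterate_add_apply, ht, hs]⟩

lemma isDesc_parent (T : IncTree M) (v : ℕ) : isDesc T (parentFn T v) v :=
  ⟨1, rfl⟩

/-- comparability of two ancestors -/
lemma isDesc_total {T : IncTree M} {a b v : ℕ} (h1 : isDesc T a v)
    (h2 : isDesc T b v) : isDesc T a b ∨ isDesc T b a := by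
  obtain ⟨s, hs⟩ := h1
  obtain ⟨t, ht⟩ := h2
  rcases le_total s t with h | h
  · right
    refine ⟨t - s, ?_⟩
    rw [← hs, ← Function.iterate_add_apply]
    rw [show t - s + s = t by omega, ht]
  · left
    refine ⟨s - t, ?_⟩
    rw [← ht, ← Function.iterate_add_apply]
    rw [show s - t + t = s by omega, hs]

/-- a root (child of 0) -/
def IsRoot (T : IncTree M) (c : ℕ) : Prop := 1 ≤ c ∧ parentFn T c = 0

lemma isDesc_zero {T : IncTree M} {c : ℕ} (hc : 1 ≤ c) : ¬ isDesc T c 0 := by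
  rintro ⟨t, ht⟩
  rw [iter_zero] at ht
  omega

lemma root_desc_eq {T : IncTree M} {c c' : ℕ} (hc : IsRoot T c)
    (hc' : IsRoot T c') (h : isDesc T c c') : c = c' := by
  obtain ⟨t, ht⟩ := h
  cases t with
  | zero => exact ht.symm
  | succ t =>
      exfalso
      rw [Function.iterate_succ_apply, hc'.2, iter_zero] at ht
      have := hc.1
      omega

lemma root_unique {T : IncTree M} {c c' v : ℕ} (hc : IsRoot T c)
    (hc' : IsRoot T c') (h : isDesc T c v) (h' : isDesc T c' v) : c = c' := by
  rcases isDesc_total h h' with hd | hd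
  · exact root_desc_eq hc hc' hd
  · exact (root_desc_eq hc' hc hd).symm

/-- root ancestor -/
def rootAnc (T : IncTree M) (v : ℕ) : ℕ :=
  if h : parentFn T v = 0 then v else rootAnc T (parentFn T v)
  termination_by v
  decreasing_by
    have hv : 1 ≤ v := by
      by_contra hc
      push_neg at hc
      interval_cases v
      exact h (pf_zero T)
    exact pf_lt T hv

lemma rootAnc_spec (T : IncTree M) {v : ℕ} (hv : 1 ≤ v) :
    IsRoot T (rootAnc T v) ∧ isDesc T (rootAnc T v) v := by
  induction v using Nat.strong_induction_on with
  | _ v ih =>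
    rw [rootAnc]
    split
    · rename_i h
      exact ⟨⟨hv, h⟩, isDesc_refl T v⟩
    · rename_i h
      have h1 : 1 ≤ parentFn T v := Nat.one_le_iff_ne_zero.mpr h
      have h2 : parentFn T v < v := pf_lt T hv
      obtain ⟨hr, hd⟩ := ih _ h2 h1
      exact ⟨hr, isDesc_trans hd (isDesc_parent T v)⟩

lemma rootAnc_isRoot (T : IncTree M) {v : ℕ} (hv : 1 ≤ v) :
    IsRoot T (rootAnc T v) := (rootAnc_spec T hv).1

lemma rootAnc_isDesc (T : IncTree M) {v : ℕ} (hv : 1 ≤ v) :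
    isDesc T (rootAnc T v) v := (rootAnc_spec T hv).2

lemma rootAnc_eq_of {T : IncTree M} {c v : ℕ} (hv : 1 ≤ v) (hc : IsRoot T c)
    (h : isDesc T c v) : rootAnc T c = c → c = rootAnc T v := by
  intro _
  exact root_unique hc (rootAnc_isRoot T hv) h (rootAnc_isDesc T hv)

lemma eq_rootAnc {T : IncTree M} {c v : ℕ} (hv : 1 ≤ v) (hc : IsRoot T c)
    (h : isDesc T c v) : c = rootAnc T v :=
  root_unique hc (rootAnc_isRoot T hv) h (rootAnc_isDesc T hv)

lemma rootAnc_le {T : IncTree M} {v : ℕ} (hv : 1 ≤ v) : rootAnc T v ≤ v :=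
  isDesc_le (rootAnc_isDesc T hv)

lemma rootAnc_pos {T : IncTree M} {v : ℕ} (hv : 1 ≤ v) : 1 ≤ rootAnc T v :=
  (rootAnc_isRoot T hv).1

/-- if parentFn T v ≠ 0 then rootAnc T v = rootAnc T (parentFn T v) -/
lemma rootAnc_parent {T : IncTree M} {v : ℕ} (h : parentFn T v ≠ 0) :
    rootAnc T v = rootAnc T (parentFn T v) := by
  rw [rootAnc]
  exact dif_neg h

noncomputable def blkCard (T : IncTree M) (v : ℕ) : ℕ :=
  subtreeCard T (rootAnc T v)

lemma nVal_zero_eq (T : IncTree M) :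
    nVal T 0 = ((Finset.Icc 1 M).filter
      (fun c => parentFn T c = 0 ∧ Even (subtreeCard T c))).card := by
  unfold nVal
  simp

/-- positivity of nVal when some block is even -/
lemma one_le_nVal {T : IncTree M} {u : ℕ} (hu : 1 ≤ u) (huM : u ≤ M)
    (h : Even (blkCard T u)) : 1 ≤ nVal T 0 := by
  rw [nVal_zero_eq]
  have hr := rootAnc_isRoot T hu
  have hmem : rootAnc T u ∈ (Finset.Icc 1 M).filter
      (fun c => parentFn T c = 0 ∧ Even (subtreeCard T c)) := by
    refine Finset.mem_filter.mpr ⟨?_, hr.2, h⟩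
    refine Finset.mem_Icc.mpr ⟨hr.1, le_trans (rootAnc_le hu) huM⟩
  have := Finset.card_pos.mpr ⟨_, hmem⟩
  omega

end MyAux

namespace MyAux

/-! ### the adjacent-transposition involution -/

section Swap

variable {M u : ℕ}

/-- transposition of `u` and `u+1` as a function on `ℕ` -/
def sw (u : ℕ) (w : ℕ) : ℕ := if w = u then u + 1 else if w = u + 1 then u else w

lemma sw_invol (u : ℕ) : Function.Involutive (sw u) := by
  intro w
  simp only [sw]
  split_ifs <;> first | omega | simp_all

lemma sw_zero (hu : 1 ≤ u) : sw u 0 = 0 := by simp only [sw]; split_ifs <;> first | omega | simp_all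

lemma sw_inj (u : ℕ) : Function.Injective (sw u) := (sw_invol u).injective

lemma sw_le {w : ℕ} (hw : w ≤ M) (huM : u + 1 ≤ M) : sw u w ≤ M := by
  simp only [sw]; split_ifs <;> first | omega | simp_all

lemma sw_pos {w : ℕ} (hw : 1 ≤ w) (hu : 1 ≤ u) : 1 ≤ sw u w := by
  simp only [sw]; split_ifs <;> first | omega | simp_all

lemma sw_fix {w : ℕ} (h1 : w ≠ u) (h2 : w ≠ u + 1) : sw u w = w := by
  simp only [sw]; split_ifs <;> first | omega | simp_all

lemma sw_u : sw u u = u + 1 := by simp only [sw]; split_ifs <;> first | omega | simp_all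

lemma sw_usucc : sw u (u+1) = u := by simp only [sw]; split_ifs <;> first | omega | simp_all

/-- bound for the conjugated parent function -/
lemma conj_bound (hu : 1 ≤ u) (T : IncTree M) (hdiff : parentFn T (u+1) ≠ u)
    {j : ℕ} (hj : 1 ≤ j) (hjM : j ≤ M) :
    sw u (parentFn T (sw u j)) < j := by
  rcases eq_or_ne j u with h | h1
  · have h2 : parentFn T (u+1) < u + 1 := pf_lt T (by omega)
    rw [h, sw_u, sw_fix hdiff (by omega)]
    omega
  · rcases eq_or_ne j (u+1) with rfl | h2
    · rw [sw_usucc]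
      have h2 : parentFn T u < u := pf_lt T hu
      simp only [sw]; split_ifs <;> first | omega | simp_all
    · rw [sw_fix h1 h2]
      have h3 : parentFn T j < j := pf_lt T hj
      simp only [sw]; split_ifs <;> first | omega | simp_all

/-- the conjugated tree -/
def conjT (hu : 1 ≤ u) (huM : u + 1 ≤ M) (T : IncTree M)
    (hdiff : parentFn T (u+1) ≠ u) : IncTree M := fun i =>
  ⟨sw u (parentFn T (sw u ((i : ℕ) + 1))),
    by
      have := conj_bound hu T hdiff (j := (i : ℕ) + 1) (by omega)
        (by have := i.isLt; omega)
      omega⟩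

variable (hu : 1 ≤ u) (huM : u + 1 ≤ M) (T : IncTree M)
  (hdiff : parentFn T (u+1) ≠ u)

lemma conjT_parentFn (w : ℕ) :
    parentFn (conjT hu huM T hdiff) w = sw u (parentFn T (sw u w)) := by
  by_cases hw : 1 ≤ w ∧ w ≤ M
  · unfold parentFn
    rw [dif_pos hw]
    show sw u (parentFn T (sw u (w - 1 + 1))) = sw u (parentFn T (sw u w))
    rw [show w - 1 + 1 = w from by omega]
  · have h1 : parentFn (conjT hu huM T hdiff) w = 0 := by
      unfold parentFn; rw [dif_neg hw]
    have h2 : sw u w = w := by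
      push_neg at hw
      rcases Nat.eq_zero_or_pos w with h | h
      · subst h; exact sw_zero hu
      · exact sw_fix (by omega) (by have := hw h; omega)
    rw [h1, h2]
    have h3 : parentFn T w = 0 := by
      unfold parentFn; rw [dif_neg]; push_neg at hw ⊢; exact hw
    rw [h3, sw_zero hu]

lemma conjT_iter (t w : ℕ) :
    (parentFn (conjT hu huM T hdiff))^[t] w
      = sw u ((parentFn T)^[t] (sw u w)) := by
  induction t generalizing w with
  | zero => simp [(sw_invol u) w]
  | succ t ih =>
      rw [Function.iterate_succ_apply, Function.iterate_succ_apply,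
        conjT_parentFn, ih, sw_invol u]

lemma conjT_isDesc (a w : ℕ) :
    isDesc (conjT hu huM T hdiff) a w ↔ isDesc T (sw u a) (sw u w) := by
  unfold isDesc
  constructor
  · rintro ⟨t, ht⟩
    refine ⟨t, ?_⟩
    have h7 := congrArg (sw u) ht
    rwa [conjT_iter, sw_invol u] at h7
  · rintro ⟨t, ht⟩
    refine ⟨t, ?_⟩
    rw [conjT_iter, ht, sw_invol u]

lemma conjT_subtreeCard (a : ℕ) :
    subtreeCard (conjT hu huM T hdiff) a = subtreeCard T (sw u a) := by
  classical
  unfold subtreeCard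
  refine Finset.card_bij (fun v _ => sw u v) ?_ ?_ ?_
  · intro v hv
    simp only [Finset.mem_filter, Finset.mem_range] at hv ⊢
    obtain ⟨hv1, hv2⟩ := hv
    refine ⟨by have := sw_le (M := M) (u := u) (w := v) (by omega) huM; omega, ?_⟩
    exact (conjT_isDesc hu huM T hdiff a v).mp hv2
  · intro v1 h1 v2 h2 h
    exact sw_inj u h
  · intro v hv
    simp only [Finset.mem_filter, Finset.mem_range] at hv
    obtain ⟨hv1, hv2⟩ := hv
    refine ⟨sw u v, ?_, sw_invol u v⟩
    simp only [Finset.mem_filter, Finset.mem_range]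
    constructor
    · have := sw_le (M := M) (u := u) (w := v) (by omega) huM; omega
    · rw [conjT_isDesc hu huM T hdiff, sw_invol u]
      exact hv2

lemma conjT_rootAnc {w : ℕ} (hw : 1 ≤ w) :
    rootAnc (conjT hu huM T hdiff) w = sw u (rootAnc T (sw u w)) := by
  have hsw : 1 ≤ sw u w := sw_pos hw hu
  have hr := rootAnc_isRoot T (v := sw u w) hsw
  have hd := rootAnc_isDesc T (v := sw u w) hsw
  refine (eq_rootAnc hw ?_ ?_).symm
  · constructor
    · exact sw_pos hr.1 hu
    · rw [conjT_parentFn, sw_invol u, hr.2, sw_zero hu]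
  · rw [conjT_isDesc hu huM T hdiff, sw_invol u]
    exact hd

lemma conjT_blkCard {w : ℕ} (hw : 1 ≤ w) :
    blkCard (conjT hu huM T hdiff) w = blkCard T (sw u w) := by
  unfold blkCard
  rw [conjT_rootAnc hu huM T hdiff hw, conjT_subtreeCard hu huM T hdiff,
    sw_invol u]

lemma conjT_nVal : nVal (conjT hu huM T hdiff) 0 = nVal T 0 := by
  classical
  rw [nVal_zero_eq, nVal_zero_eq]
  refine Finset.card_bij (fun c _ => sw u c) ?_ ?_ ?_
  · intro c hc
    simp only [Finset.mem_filter, Finset.mem_Icc] at hc ⊢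
    obtain ⟨⟨hc1, hc2⟩, hc3, hc4⟩ := hc
    refine ⟨⟨sw_pos hc1 hu, sw_le hc2 huM⟩, ?_, ?_⟩
    · rw [conjT_parentFn] at hc3
      have h5 := sw_inj u (a₁ := parentFn T (sw u c)) (a₂ := 0)
      rw [sw_zero hu] at h5
      exact h5 hc3
    · rw [conjT_subtreeCard hu huM T hdiff] at hc4
      exact hc4
  · intro c1 h1 c2 h2 h
    exact sw_inj u h
  · intro c hc
    simp only [Finset.mem_filter, Finset.mem_Icc] at hc
    obtain ⟨⟨hc1, hc2⟩, hc3, hc4⟩ := hc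
    refine ⟨sw u c, ?_, sw_invol u c⟩
    simp only [Finset.mem_filter, Finset.mem_Icc]
    refine ⟨⟨sw_pos hc1 hu, sw_le hc2 huM⟩, ?_, ?_⟩
    · rw [conjT_parentFn, sw_invol u, hc3, sw_zero hu]
    · rw [conjT_subtreeCard hu huM T hdiff, sw_invol u]
      exact hc4

/-- the parity-swap involution -/
noncomputable def psi (hu : 1 ≤ u) (huM : u + 1 ≤ M) (T : IncTree M) :
    IncTree M :=
  if h : parentFn T (u+1) = u then T else conjT hu huM T h

lemma sameBlock_of_parent {T : IncTree M} (h : parentFn T (u+1) = u)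
    (hu : 1 ≤ u) : rootAnc T (u+1) = rootAnc T u := by
  have h0 : parentFn T (u+1) ≠ 0 := by omega
  rw [rootAnc_parent h0, h]

lemma conjT_parent_ne :
    parentFn (conjT hu huM T hdiff) (u+1) ≠ u := by
  rw [conjT_parentFn, sw_usucc]
  intro hcon
  have h1 : parentFn T u < u := pf_lt T hu
  simp only [sw] at hcon
  split_ifs at hcon <;> first | omega | simp_all

lemma psi_invol : Function.Involutive (psi hu huM) := by
  intro S
  by_cases h : parentFn S (u+1) = u
  · unfold psi
    rw [dif_pos h, dif_pos h]
  · unfold psi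
    rw [dif_neg h, dif_neg (conjT_parent_ne hu huM S h)]
    funext i
    apply Fin.ext
    show sw u (parentFn (conjT hu huM S h) (sw u ((i : ℕ) + 1))) = (S i : ℕ)
    rw [conjT_parentFn, sw_invol u, sw_invol u]
    have h6 : parentFn S ((i : ℕ) + 1) = (S i : ℕ) := by
      unfold parentFn
      rw [dif_pos ⟨by omega, by have := i.isLt; omega⟩]
      congr 1
    rw [h6]

lemma psi_nVal (S : IncTree M) : nVal (psi hu huM S) 0 = nVal S 0 := by
  unfold psi
  split
  · rfl
  · exact conjT_nVal hu huM S _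

lemma psi_blkCard_u (S : IncTree M) :
    blkCard (psi hu huM S) u = blkCard S (u+1) := by
  unfold psi
  split
  · rename_i h
    unfold blkCard
    rw [sameBlock_of_parent h hu]
  · rename_i h
    rw [conjT_blkCard hu huM S h hu, sw_u]

end Swap

end MyAux

namespace MyAux

/-! ### extending a tree by a new largest vertex -/

section Snoc

open scoped Classical

variable {M : ℕ}

def snocT (T : IncTree M) (u : Fin (M+1)) : IncTree (M+1) :=
  Fin.snoc T u

lemma snocT_pf_low (T : IncTree M) (u : Fin (M+1)) {v : ℕ} (hv : v ≤ M) :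
    parentFn (snocT T u) v = parentFn T v := by
  rcases Nat.eq_zero_or_pos v with rfl | hv1
  · rw [pf_zero, pf_zero]
  · unfold parentFn
    rw [dif_pos ⟨hv1, by omega⟩, dif_pos ⟨hv1, hv⟩]
    show ((Fin.snoc T u : (i : Fin (M+1)) → Fin ((i:ℕ)+1)) ⟨v - 1, by omega⟩ : ℕ) = _
    have hidx : (⟨v - 1, by omega⟩ : Fin (M+1))
        = Fin.castSucc ⟨v - 1, by omega⟩ := by
      apply Fin.ext
      simp [Fin.castSucc]
    rw [hidx, Fin.snoc_castSucc]

lemma snocT_pf_top (T : IncTree M) (u : Fin (M+1)) :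
    parentFn (snocT T u) (M+1) = (u : ℕ) := by
  unfold parentFn
  rw [dif_pos ⟨by omega, by omega⟩]
  show ((Fin.snoc T u : (i : Fin (M+1)) → Fin ((i:ℕ)+1)) ⟨M + 1 - 1, by omega⟩ : ℕ) = _
  have hidx : (⟨M + 1 - 1, by omega⟩ : Fin (M+1)) = Fin.last M := by
    apply Fin.ext
    simp [Fin.last]
  rw [hidx, Fin.snoc_last]

lemma snocT_iter (T : IncTree M) (u : Fin (M+1)) (t : ℕ) {v : ℕ} (hv : v ≤ M) :
    (parentFn (snocT T u))^[t] v = (parentFn T)^[t] v := by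
  induction t generalizing v with
  | zero => rfl
  | succ t ih =>
      rw [Function.iterate_succ_apply, Function.iterate_succ_apply,
        snocT_pf_low T u hv, ih (pf_le_M T v)]

lemma snocT_isDesc_low (T : IncTree M) (u : Fin (M+1)) (a : ℕ) {v : ℕ}
    (hv : v ≤ M) : isDesc (snocT T u) a v ↔ isDesc T a v := by
  unfold isDesc
  constructor
  · rintro ⟨t, ht⟩
    exact ⟨t, by rw [← snocT_iter T u t hv, ht]⟩
  · rintro ⟨t, ht⟩
    exact ⟨t, by rw [snocT_iter T u t hv, ht]⟩

lemma snocT_isDesc_top (T : IncTree M) (u : Fin (M+1)) (a : ℕ) :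
    isDesc (snocT T u) a (M+1) ↔ a = M + 1 ∨ isDesc T a (u : ℕ) := by
  constructor
  · rintro ⟨t, ht⟩
    cases t with
    | zero => exact Or.inl ht.symm
    | succ t =>
        right
        rw [Function.iterate_succ_apply, snocT_pf_top T u] at ht
        rw [snocT_iter T u t (by omega : (u:ℕ) ≤ M)] at ht
        exact ⟨t, ht⟩
  · rintro (rfl | ⟨t, ht⟩)
    · exact isDesc_refl _ _
    · refine ⟨t + 1, ?_⟩
      rw [Function.iterate_succ_apply, snocT_pf_top T u,
        snocT_iter T u t (by omega : (u:ℕ) ≤ M), ht]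

lemma snocT_subtreeCard_low (T : IncTree M) (u : Fin (M+1)) {c : ℕ}
    (hc : 1 ≤ c) (hcM : c ≤ M) :
    subtreeCard (snocT T u) c
      = subtreeCard T c + (if isDesc T c (u : ℕ) then 1 else 0) := by
  classical
  unfold subtreeCard
  rw [show M + 1 + 1 = (M + 1) + 1 from rfl, Finset.range_add_one,
    Finset.filter_insert]
  have hfc : (Finset.range (M+1)).filter (fun v => isDesc (snocT T u) c v)
      = (Finset.range (M+1)).filter (fun v => isDesc T c v) := by
    refine Finset.filter_congr ?_
    intro v hv
    simp only [Finset.mem_range] at hv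
    rw [snocT_isDesc_low T u c (by omega : v ≤ M)]
  have htop : isDesc (snocT T u) c (M+1) ↔ isDesc T c (u:ℕ) := by
    rw [snocT_isDesc_top T u c]
    constructor
    · rintro (h | h)
      · omega
      · exact h
    · exact Or.inr
  by_cases h : isDesc T c (u:ℕ)
  · rw [if_pos (htop.mpr h), if_pos h,
      Finset.card_insert_of_notMem (by simp), hfc]
  · rw [if_neg (fun hh => h (htop.mp hh)), if_neg h, hfc]
    omega

lemma snocT_subtreeCard_top (T : IncTree M) (u : Fin (M+1)) :
    subtreeCard (snocT T u) (M+1) = 1 := by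
  classical
  unfold subtreeCard
  have : (Finset.range (M+1+1)).filter (fun v => isDesc (snocT T u) (M+1) v)
      = {M+1} := by
    ext v
    simp only [Finset.mem_filter, Finset.mem_range, Finset.mem_singleton]
    constructor
    · rintro ⟨h1, t, ht⟩
      have h2 := iter_le (snocT T u) t v
      omega
    · rintro rfl
      exact ⟨by omega, isDesc_refl _ _⟩
  rw [this, Finset.card_singleton]

lemma snocT_rootAnc_low (T : IncTree M) (u : Fin (M+1)) {v : ℕ}
    (hv : 1 ≤ v) (hvM : v ≤ M) :
    rootAnc (snocT T u) v = rootAnc T v := by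
  have hr := rootAnc_isRoot T hv
  have hd := rootAnc_isDesc T hv
  have hle : rootAnc T v ≤ M := le_trans (rootAnc_le hv) hvM
  refine (eq_rootAnc hv ?_ ?_).symm
  · exact ⟨hr.1, by rw [snocT_pf_low T u hle, hr.2]⟩
  · rw [snocT_isDesc_low T u _ hvM]
    exact hd

lemma snocT_rootAnc_top (T : IncTree M) (u : Fin (M+1)) :
    rootAnc (snocT T u) (M+1)
      = if (u : ℕ) = 0 then M + 1 else rootAnc T (u : ℕ) := by
  split_ifs with h0
  · refine (eq_rootAnc (by omega) ?_ (isDesc_refl _ _)).symm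
    exact ⟨by omega, by rw [snocT_pf_top T u, h0]⟩
  · have hu1 : 1 ≤ (u : ℕ) := by omega
    have hr := rootAnc_isRoot T hu1
    have hd := rootAnc_isDesc T hu1
    have hle : rootAnc T (u:ℕ) ≤ M := le_trans (rootAnc_le hu1) (by omega)
    refine (eq_rootAnc (by omega) ?_ ?_).symm
    · exact ⟨hr.1, by rw [snocT_pf_low T u hle, hr.2]⟩
    · rw [snocT_isDesc_top T u]
      exact Or.inr hd

lemma snocT_blkCard_top (T : IncTree M) (u : Fin (M+1)) :
    blkCard (snocT T u) (M+1)
      = if (u : ℕ) = 0 then 1 else blkCard T (u : ℕ) + 1 := by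
  unfold blkCard
  rw [snocT_rootAnc_top T u]
  split_ifs with h0
  · exact snocT_subtreeCard_top T u
  · have hu1 : 1 ≤ (u : ℕ) := by omega
    have hr1 : 1 ≤ rootAnc T (u:ℕ) := rootAnc_pos hu1
    have hle : rootAnc T (u:ℕ) ≤ M := le_trans (rootAnc_le hu1) (by omega)
    rw [snocT_subtreeCard_low T u hr1 hle,
      if_pos (rootAnc_isDesc T hu1)]

lemma snocT_nVal_zero (T : IncTree M) (u : Fin (M+1)) (h0 : (u : ℕ) = 0) :
    nVal (snocT T u) 0 = nVal T 0 := by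
  classical
  rw [nVal_zero_eq, nVal_zero_eq]
  have hsplit : Finset.Icc 1 (M+1) = insert (M+1) (Finset.Icc 1 M) := by
    ext c
    simp only [Finset.mem_Icc, Finset.mem_insert]
    omega
  rw [hsplit, Finset.filter_insert]
  rw [if_neg (by
    rintro ⟨-, h2⟩
    rw [snocT_subtreeCard_top T u] at h2
    simp at h2)]
  refine Finset.card_bij (fun c _ => c) ?_ (fun c1 h1 c2 h2 h => h) ?_
  · intro c hc
    simp only [Finset.mem_filter, Finset.mem_Icc] at hc ⊢
    obtain ⟨⟨hc1, hc2⟩, hc3, hc4⟩ := hc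
    rw [snocT_pf_low T u hc2] at hc3
    rw [snocT_subtreeCard_low T u hc1 hc2] at hc4
    rw [if_neg (by
      intro hd
      have := isDesc_le hd
      rw [h0] at this
      omega)] at hc4
    exact ⟨⟨hc1, hc2⟩, hc3, hc4⟩
  · intro c hc
    simp only [Finset.mem_filter, Finset.mem_Icc] at hc
    obtain ⟨⟨hc1, hc2⟩, hc3, hc4⟩ := hc
    refine ⟨c, ?_, rfl⟩
    simp only [Finset.mem_filter, Finset.mem_Icc]
    refine ⟨⟨hc1, hc2⟩, ?_, ?_⟩
    · rw [snocT_pf_low T u hc2]; exact hc3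
    · rw [snocT_subtreeCard_low T u hc1 hc2]
      rw [if_neg (by
        intro hd
        have := isDesc_le hd
        rw [h0] at this
        omega)]
      exact hc4

lemma snocT_nVal_pos (T : IncTree M) (u : Fin (M+1)) (h0 : 1 ≤ (u : ℕ)) :
    nVal (snocT T u) 0
      = if Even (blkCard T (u : ℕ)) then nVal T 0 - 1 else nVal T 0 + 1 := by
  classical
  set r := rootAnc T (u : ℕ) with hr_def
  have hr := rootAnc_isRoot T h0
  have hrd := rootAnc_isDesc T h0
  have hr1 : 1 ≤ r := hr.1
  have hrM : r ≤ M := le_trans (rootAnc_le h0) (by omega)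
  rw [nVal_zero_eq, nVal_zero_eq]
  have hsplit : Finset.Icc 1 (M+1) = insert (M+1) (Finset.Icc 1 M) := by
    ext c
    simp only [Finset.mem_Icc, Finset.mem_insert]
    omega
  rw [hsplit, Finset.filter_insert]
  rw [if_neg (by
    rintro ⟨-, h2⟩
    rw [snocT_subtreeCard_top T u] at h2
    simp at h2)]
  set Sold := (Finset.Icc 1 M).filter
    (fun c => parentFn T c = 0 ∧ Even (subtreeCard T c)) with hSold
  have hblk : blkCard T (u : ℕ) = subtreeCard T r := rfl
  rw [hblk]
  have hkey : (Finset.Icc 1 M).filter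
      (fun c => parentFn (snocT T u) c = 0 ∧ Even (subtreeCard (snocT T u) c))
      = if Even (subtreeCard T r) then Sold.erase r else insert r Sold := by
    ext c
    split_ifs with hev
    · simp only [hSold, Finset.mem_erase, Finset.mem_filter, Finset.mem_Icc]
      constructor
      · rintro ⟨⟨hc1, hc2⟩, hp, he⟩
        rw [snocT_pf_low T u hc2] at hp
        rw [snocT_subtreeCard_low T u hc1 hc2] at he
        by_cases hcr : c = r
        · subst hcr
          rw [if_pos hrd, Nat.even_add_one] at he
          exact absurd hev he
        · have hnd : ¬ isDesc T c (u:ℕ) :=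
            fun hd => hcr (eq_rootAnc h0 ⟨hc1, hp⟩ hd)
          rw [if_neg hnd, Nat.add_zero] at he
          exact ⟨hcr, ⟨hc1, hc2⟩, hp, he⟩
      · rintro ⟨hcr, ⟨hc1, hc2⟩, hp, he⟩
        have hnd : ¬ isDesc T c (u:ℕ) :=
          fun hd => hcr (eq_rootAnc h0 ⟨hc1, hp⟩ hd)
        refine ⟨⟨hc1, hc2⟩, ?_, ?_⟩
        · rw [snocT_pf_low T u hc2]; exact hp
        · rw [snocT_subtreeCard_low T u hc1 hc2, if_neg hnd, Nat.add_zero]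
          exact he
    · simp only [hSold, Finset.mem_insert, Finset.mem_filter, Finset.mem_Icc]
      constructor
      · rintro ⟨⟨hc1, hc2⟩, hp, he⟩
        rw [snocT_pf_low T u hc2] at hp
        rw [snocT_subtreeCard_low T u hc1 hc2] at he
        by_cases hcr : c = r
        · exact Or.inl hcr
        · have hnd : ¬ isDesc T c (u:ℕ) :=
            fun hd => hcr (eq_rootAnc h0 ⟨hc1, hp⟩ hd)
          rw [if_neg hnd, Nat.add_zero] at he
          exact Or.inr ⟨⟨hc1, hc2⟩, hp, he⟩
      · rintro (rfl | ⟨⟨hc1, hc2⟩, hp, he⟩)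
        · refine ⟨⟨hr1, hrM⟩, ?_, ?_⟩
          · rw [snocT_pf_low T u hrM]; exact hr.2
          · rw [snocT_subtreeCard_low T u hr1 hrM, if_pos hrd,
              Nat.even_add_one]
            exact hev
        · by_cases hcr : c = r
          · subst hcr
            exact absurd he hev
          · have hnd : ¬ isDesc T c (u:ℕ) :=
              fun hd => hcr (eq_rootAnc h0 ⟨hc1, hp⟩ hd)
            refine ⟨⟨hc1, hc2⟩, ?_, ?_⟩
            · rw [snocT_pf_low T u hc2]; exact hp
            · rw [snocT_subtreeCard_low T u hc1 hc2, if_neg hnd,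
                Nat.add_zero]
              exact he
  rw [hkey]
  split_ifs with hev
  · have hrS : r ∈ Sold := by
      rw [hSold, Finset.mem_filter, Finset.mem_Icc]
      exact ⟨⟨hr1, hrM⟩, hr.2, hev⟩
    rw [Finset.card_erase_of_mem hrS]
  · have hrS : r ∉ Sold := by
      rw [hSold, Finset.mem_filter, Finset.mem_Icc]
      rintro ⟨-, -, he⟩
      exact hev he
    rw [Finset.card_insert_of_notMem hrS]

end Snoc

end MyAux

namespace MyAux

open Polynomial

section Sums

/-- the equivalence extending a tree by a choice of parent for the new vertex -/
def snocEquiv (M : ℕ) : (IncTree M × Fin (M+1)) ≃ IncTree (M+1) where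
  toFun p := snocT p.1 p.2
  invFun T := (fun i => T i.castSucc, T (Fin.last M))
  left_inv p := by
    obtain ⟨T, u⟩ := p
    refine Prod.ext ?_ ?_
    · funext i
      show (snocT T u) i.castSucc = T i
      exact Fin.snoc_castSucc ..
    · show (snocT T u) (Fin.last M) = u
      exact Fin.snoc_last ..
  right_inv T := by
    funext i
    induction i using Fin.lastCases with
    | last => exact Fin.snoc_last ..
    | cast j => exact Fin.snoc_castSucc ..

noncomputable def Psum (M : ℕ) : Polynomial ℤ :=
  ∑ T : IncTree M, Polynomial.X ^ nVal T 0

noncomputable def F (n s : ℕ) : Polynomial ℤ :=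
  if Even s then Polynomial.X ^ (n-1) else Polynomial.X ^ (n+1)

noncomputable def Q (M v : ℕ) : Polynomial ℤ :=
  ∑ T : IncTree M, F (nVal T 0) (blkCard T v)

lemma X_pow_snoc (M : ℕ) (T : IncTree M) (u : Fin (M+1)) :
    (Polynomial.X : Polynomial ℤ) ^ nVal (snocT T u) 0
      = if (u : ℕ) = 0 then Polynomial.X ^ nVal T 0
        else F (nVal T 0) (blkCard T (u : ℕ)) := by
  split_ifs with h0
  · rw [snocT_nVal_zero T u h0]
  · rw [snocT_nVal_pos T u (by omega)]
    unfold F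
    split_ifs with he
    · rfl
    · rfl

lemma psum_rec_aux (M : ℕ) :
    Psum (M+1) = Psum M + ∑ j ∈ Finset.range M, Q M (j+1) := by
  unfold Psum
  rw [← Equiv.sum_comp (snocEquiv M)
    (fun T => (Polynomial.X : Polynomial ℤ) ^ nVal T 0)]
  rw [Fintype.sum_prod_type]
  have hinner : ∀ T : IncTree M,
      (∑ u : Fin (M+1),
        (Polynomial.X : Polynomial ℤ) ^ nVal (snocT T u) 0)
      = Polynomial.X ^ nVal T 0
        + ∑ j ∈ Finset.range M, F (nVal T 0) (blkCard T (j+1)) := by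
    intro T
    have h1 : ∀ u : Fin (M+1),
        (Polynomial.X : Polynomial ℤ) ^ nVal (snocT T u) 0
        = (fun j : ℕ => if j = 0 then Polynomial.X ^ nVal T 0
            else F (nVal T 0) (blkCard T j)) (u : ℕ) :=
      fun u => X_pow_snoc M T u
    rw [Finset.sum_congr rfl (fun u _ => h1 u),
      Fin.sum_univ_eq_sum_range (fun j : ℕ => if j = 0 then Polynomial.X ^ nVal T 0
        else F (nVal T 0) (blkCard T j)) (M+1), Finset.sum_range_succ']
    rw [add_comm]
    congr 1
  calc ∑ T : IncTree M, ∑ u : Fin (M+1),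
        (Polynomial.X : Polynomial ℤ) ^ nVal (snocT T u) 0
      = ∑ T : IncTree M, (Polynomial.X ^ nVal T 0
          + ∑ j ∈ Finset.range M, F (nVal T 0) (blkCard T (j+1))) := by
        exact Finset.sum_congr rfl (fun T _ => hinner T)
    _ = (∑ T : IncTree M, (Polynomial.X : Polynomial ℤ) ^ nVal T 0)
          + ∑ T : IncTree M, ∑ j ∈ Finset.range M,
              F (nVal T 0) (blkCard T (j+1)) := Finset.sum_add_distrib
    _ = _ := by
        congr 1
        rw [Finset.sum_comm]
        rfl

lemma Q_succ (M v : ℕ) (hv : 1 ≤ v) (hvM : v + 1 ≤ M) :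
    Q M (v+1) = Q M v := by
  unfold Q
  refine Fintype.sum_equiv ((psi_invol hv hvM).toPerm) _ _ ?_
  intro T
  show F (nVal T 0) (blkCard T (v+1))
    = F (nVal (psi hv hvM T) 0) (blkCard (psi hv hvM T) v)
  rw [psi_nVal hv hvM T, psi_blkCard_u hv hvM T]

lemma Q_up (M : ℕ) : ∀ d v, 1 ≤ v → v + d = M → Q M v = Q M M := by
  intro d
  induction d with
  | zero =>
      intro v hv he
      rw [show v = M by omega]
  | succ d ih =>
      intro v hv he
      rw [← Q_succ M v hv (by omega)]
      exact ih (v+1) (by omega) (by omega)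

lemma Q_last (N : ℕ) :
    Q (N+1) (N+1) = Polynomial.X * Psum N + N • Psum N := by
  unfold Q Psum
  rw [← Equiv.sum_comp (snocEquiv N)
    (fun T => F (nVal T 0) (blkCard T (N+1)))]
  rw [Fintype.sum_prod_type]
  have hinner : ∀ T : IncTree N,
      (∑ w : Fin (N+1), F (nVal (snocT T w) 0) (blkCard (snocT T w) (N+1)))
      = Polynomial.X * Polynomial.X ^ nVal T 0
        + N • (Polynomial.X ^ nVal T 0) := by
    intro T
    have h1 : ∀ w : Fin (N+1),
        F (nVal (snocT T w) 0) (blkCard (snocT T w) (N+1))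
        = (fun j : ℕ => if j = 0
            then Polynomial.X * Polynomial.X ^ nVal T 0
            else Polynomial.X ^ nVal T 0) (w : ℕ) := by
      intro w
      simp only
      rw [snocT_blkCard_top T w]
      split_ifs with h0
      · rw [snocT_nVal_zero T w h0]
        unfold F
        rw [if_neg (by simp), ← pow_succ']
      · rw [snocT_nVal_pos T w (by omega)]
        by_cases he : Even (blkCard T (w : ℕ))
        · rw [if_pos he]
          unfold F
          rw [if_neg (by rw [Nat.even_add_one]; exact fun h => h he)]
          have h1 : 1 ≤ nVal T 0 := one_le_nVal (by omega) (by omega) he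
          congr 1
          omega
        · rw [if_neg he]
          unfold F
          rw [if_pos (by rw [Nat.even_add_one]; exact he)]
          congr 1
    rw [Finset.sum_congr rfl (fun w _ => h1 w),
      Fin.sum_univ_eq_sum_range (fun j : ℕ => if j = 0
        then Polynomial.X * Polynomial.X ^ nVal T 0
        else Polynomial.X ^ nVal T 0) (N+1), Finset.sum_range_succ']
    rw [add_comm]
    congr 1
    rw [Finset.sum_congr rfl (fun j hj => if_neg (by omega)),
      Finset.sum_const, Finset.card_range]
  refine Eq.trans (Finset.sum_congr rfl (fun T _ => hinner T)) ?_
  rw [Finset.sum_add_distrib, ← Finset.mul_sum, Finset.smul_sum]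

lemma psum_rec (N : ℕ) :
    Psum (N+2) = Psum (N+1)
      + Polynomial.C ((N : ℤ) + 1)
        * ((Polynomial.X + Polynomial.C (N : ℤ)) * Psum N) := by
  rw [psum_rec_aux (N+1)]
  congr 1
  rw [Finset.sum_congr rfl
    (fun j hj => Q_up (N+1) (N - j) (j+1) (by omega)
      (by have := Finset.mem_range.mp hj; omega)),
    Finset.sum_const, Finset.card_range, Q_last N]
  rw [smul_add, smul_smul]
  rw [nsmul_eq_mul, nsmul_eq_mul]
  simp only [map_add, map_one, Polynomial.C_eq_natCast]
  push_cast
  ring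

lemma psum_zero : Psum 0 = 1 := by
  have h1 : ∀ T : IncTree 0, nVal T 0 = 0 := by
    intro T
    unfold nVal
    simp
  unfold Psum
  rw [Finset.sum_congr rfl (fun T _ => by rw [h1 T, pow_zero])]
  rw [Finset.sum_const, Finset.card_univ]
  have : Fintype.card (IncTree 0) = 1 := by
    simp [Fintype.card_pi]
  rw [this, one_smul]

lemma psum_one : Psum 1 = 1 := by
  have := psum_rec_aux 0
  simpa [psum_zero] using this

end Sums

end MyAux

namespace MyAux

open Polynomial

lemma df_odd (k : ℕ) :
    (2*k+1).doubleFactorial = (2*k+1) * (2*k-1).doubleFactorial := by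
  cases k with
  | zero => simp [Nat.doubleFactorial]
  | succ k =>
      have h1 : 2*(k+1)+1 = (2*k+1) + 2 := by ring
      have h2 : 2*(k+1)-1 = 2*k+1 := by omega
      rw [h1, h2, Nat.doubleFactorial_add_two]

lemma main_ind (k : ℕ) :
    Psum (2*k) = Polynomial.C (((2*k-1).doubleFactorial : ℕ) : ℤ)
        * ∏ j ∈ Finset.range k, (Polynomial.X + Polynomial.C (2*(j : ℤ)+1))
    ∧ Psum (2*k+1) = Polynomial.C (((2*k+1).doubleFactorial : ℕ) : ℤ)
        * ∏ j ∈ Finset.range k, (Polynomial.X + Polynomial.C (2*(j : ℤ)+1)) := by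
  induction k with
  | zero =>
      constructor
      · simp [psum_zero, Nat.doubleFactorial]
      · simpa [Nat.doubleFactorial] using psum_one
  | succ k ih =>
      obtain ⟨ih1, ih2⟩ := ih
      have hrec1 : Psum (2*k+2) = Psum (2*k+1)
          + Polynomial.C (((2*k : ℕ) : ℤ) + 1)
            * ((Polynomial.X + Polynomial.C ((2*k : ℕ) : ℤ)) * Psum (2*k)) :=
        psum_rec (2*k)
      have hrec2 : Psum (2*k+3) = Psum (2*k+2)
          + Polynomial.C (((2*k+1 : ℕ) : ℤ) + 1)
            * ((Polynomial.X + Polynomial.C ((2*k+1 : ℕ) : ℤ)) * Psum (2*k+1)) :=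
        psum_rec (2*k+1)
      have hp1 : Psum (2*(k+1)) = Polynomial.C (((2*(k+1)-1).doubleFactorial : ℕ) : ℤ)
          * ∏ j ∈ Finset.range (k+1), (Polynomial.X + Polynomial.C (2*(j : ℤ)+1)) := by
        rw [show 2*(k+1)-1 = 2*k+1 by omega, show 2*(k+1) = 2*k+2 by ring,
          hrec1, ih1, ih2, df_odd k, Finset.prod_range_succ]
        simp only [map_add, map_mul, map_one, map_ofNat, map_natCast]
        push_cast
        ring
      refine ⟨hp1, ?_⟩
      rw [show 2*(k+1)+1 = (2*k+1)+2 by ring, hrec2,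
        Nat.doubleFactorial_add_two]
      rw [show 2*k+2 = 2*(k+1) by ring, hp1,
        show 2*(k+1)-1 = 2*k+1 by omega, ih2, Finset.prod_range_succ]
      simp only [map_add, map_mul, map_one, map_ofNat, map_natCast]
      push_cast
      ring

end MyAux


theorem stmt16 (k : ℕ) (hk : 1 ≤ k) :
    ∑ T : IncTree (2*k), (Polynomial.X : Polynomial ℤ) ^ nVal T 0
      = Polynomial.C (((2*k-1).doubleFactorial : ℕ) : ℤ)
        * ∏ j ∈ Finset.range k, (Polynomial.X + Polynomial.C (2*(j : ℤ)+1)) := by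
  exact (MyAux.main_ind k).1
end
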